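/- arXiv:1409.1478 — 12 statements merged into one kernel-verified Lean document; each statement's English description precedes it below -/
import Mathlib

section
/- Let 𝒫 be a finite partition of a compact metric space M into nonempty clopen sets. If μ, ν are Borel probability measures on M such that |μ(a) − ν(a)| ≤ mesh(𝒫)/card(𝒫) for every a ∈ 𝒫, then d_P(μ,ν) ≤ mesh(𝒫). -/
open MeasureTheory Metric Set

/-- The Prohorov metric on Borel (probability) measures. -/
noncomputable def prohorovDist {M : Type*} [MetricSpace M] [MeasurableSpace M]
    (μ ν : Measure M) : ℝ :=
  sInf {δ : ℝ | 0 < δ ∧ ∀ X : Set M, MeasurableSet X →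
    μ X ≤ ν (Metric.thickening δ X) + ENNReal.ofReal δ ∧
    ν X ≤ μ (Metric.thickening δ X) + ENNReal.ofReal δ}

lemma key_bound {M : Type*} [MetricSpace M] [CompactSpace M]
    [MeasurableSpace M] [BorelSpace M]
    (P : Finset (Set M))
    (hclopen : ∀ a ∈ P, IsClopen a)
    (hdisj : (P : Set (Set M)).PairwiseDisjoint id)
    (hcover : ⋃ a ∈ P, a = Set.univ)
    (m δ : ℝ) (hm : IsGreatest (Metric.diam '' (P : Set (Set M))) m)
    (hδ : m < δ)
    (μ ν : Measure M) [IsProbabilityMeasure μ] [IsProbabilityMeasure ν]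
    (h : ∀ a ∈ P, (μ a).toReal ≤ (ν a).toReal + m / P.card)
    (X : Set M) (hX : MeasurableSet X) :
    μ X ≤ ν (Metric.thickening δ X) + ENNReal.ofReal δ := by
  classical
  obtain ⟨a₀, ha₀P, ha₀⟩ := hm.1
  have hPne : P.Nonempty := ⟨a₀, ha₀P⟩
  have hm0 : 0 ≤ m := ha₀ ▸ Metric.diam_nonneg
  have hPcard : (0:ℝ) < P.card := by exact_mod_cast Finset.card_pos.mpr hPne
  set P' : Finset (Set M) := P.filter (fun a => (a ∩ X).Nonempty) with hP'
  have hP'sub : P' ⊆ P := Finset.filter_subset _ _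
  set A : Set M := ⋃ a ∈ P', a with hA
  -- X ⊆ A
  have hXA : X ⊆ A := by
    intro x hx
    have : x ∈ ⋃ a ∈ P, a := hcover ▸ Set.mem_univ x
    obtain ⟨a, haP, hxa⟩ := Set.mem_iUnion₂.mp this
    exact Set.mem_iUnion₂.mpr ⟨a, Finset.mem_filter.mpr ⟨haP, ⟨x, hxa, hx⟩⟩, hxa⟩
  -- A ⊆ thickening δ X
  have hAth : A ⊆ Metric.thickening δ X := by
    intro y hy
    obtain ⟨a, haP', hya⟩ := Set.mem_iUnion₂.mp hy
    obtain ⟨haP, ⟨x, hxa, hxX⟩⟩ := Finset.mem_filter.mp haP'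
    have hbdd : Bornology.IsBounded a := (isCompact_univ.of_isClosed_subset
      (hclopen a haP).1 (Set.subset_univ a)).isBounded
    have : dist y x ≤ m := le_trans (Metric.dist_le_diam_of_mem hbdd hya hxa)
      (hm.2 ⟨a, haP, rfl⟩)
    exact Metric.mem_thickening_iff.mpr ⟨x, hxX, lt_of_le_of_lt this hδ⟩
  have hmeas : ∀ a ∈ P, MeasurableSet a := fun a ha => (hclopen a ha).1.measurableSet
  have hμA : μ A = ∑ a ∈ P', μ a :=
    measure_biUnion_finset (hdisj.subset (by exact_mod_cast hP'sub))
      (fun a ha => hmeas a (hP'sub ha))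
  have hνA : ν A = ∑ a ∈ P', ν a :=
    measure_biUnion_finset (hdisj.subset (by exact_mod_cast hP'sub))
      (fun a ha => hmeas a (hP'sub ha))
  have hfin : ∀ (κ : Measure M) [IsProbabilityMeasure κ] (s : Set M), κ s ≠ ⊤ :=
    fun κ _ s => measure_ne_top κ s
  -- real-valued chain
  have hreal : (μ A).toReal ≤ (ν A).toReal + m := by
    rw [hμA, hνA, ENNReal.toReal_sum (fun a _ => measure_ne_top μ a),
      ENNReal.toReal_sum (fun a _ => measure_ne_top ν a)]
    calc ∑ a ∈ P', (μ a).toReal ≤ ∑ a ∈ P', ((ν a).toReal + m / P.card) :=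
          Finset.sum_le_sum (fun a ha => h a (hP'sub ha))
      _ = (∑ a ∈ P', (ν a).toReal) + P'.card * (m / P.card) := by
          rw [Finset.sum_add_distrib, Finset.sum_const, nsmul_eq_mul]
      _ ≤ (∑ a ∈ P', (ν a).toReal) + m := by
          have h1 : (P'.card : ℝ) ≤ P.card := by
            exact_mod_cast Finset.card_le_card hP'sub
          have h2 : (P'.card : ℝ) * (m / P.card) ≤ P.card * (m / P.card) :=
            mul_le_mul_of_nonneg_right h1 (div_nonneg hm0 hPcard.le)
          have h3 : (P.card : ℝ) * (m / P.card) = m := by field_simp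
          linarith
  have hXAreal : (μ X).toReal ≤ (μ A).toReal :=
    ENNReal.toReal_mono (measure_ne_top μ A) (measure_mono hXA)
  have hAth' : (ν A).toReal ≤ (ν (Metric.thickening δ X)).toReal :=
    ENNReal.toReal_mono (measure_ne_top ν _) (measure_mono hAth)
  have hfinal : (μ X).toReal ≤ (ν (Metric.thickening δ X)).toReal + δ := by linarith
  calc μ X = ENNReal.ofReal (μ X).toReal := (ENNReal.ofReal_toReal (measure_ne_top μ X)).symm
    _ ≤ ENNReal.ofReal ((ν (Metric.thickening δ X)).toReal + δ) :=
        ENNReal.ofReal_le_ofReal hfinal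
    _ = ENNReal.ofReal (ν (Metric.thickening δ X)).toReal + ENNReal.ofReal δ :=
        ENNReal.ofReal_add ENNReal.toReal_nonneg (by linarith)
    _ = ν (Metric.thickening δ X) + ENNReal.ofReal δ := by
        rw [ENNReal.ofReal_toReal (measure_ne_top ν _)]

/-- Lemma 2: if `|μ(a) - ν(a)| ≤ mesh(P)/card(P)` for all `a ∈ P`, then
`d_P(μ,ν) ≤ mesh(P)`, where `mesh(P)` is the maximum diameter of the elements of `P`. -/
theorem prohorovDist_le_mesh {M : Type*} [MetricSpace M] [CompactSpace M]
    [MeasurableSpace M] [BorelSpace M]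
    (P : Finset (Set M))
    (hclopen : ∀ a ∈ P, IsClopen a) (hne : ∀ a ∈ P, a.Nonempty)
    (hdisj : (P : Set (Set M)).PairwiseDisjoint id)
    (hcover : ⋃ a ∈ P, a = Set.univ)
    (m : ℝ) (hm : IsGreatest (Metric.diam '' (P : Set (Set M))) m)
    (μ ν : Measure M) [IsProbabilityMeasure μ] [IsProbabilityMeasure ν]
    (h : ∀ a ∈ P, |(μ a).toReal - (ν a).toReal| ≤ m / P.card) :
    prohorovDist μ ν ≤ m := by
  obtain ⟨a₀, ha₀P, ha₀⟩ := hm.1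
  have hm0 : 0 ≤ m := ha₀ ▸ Metric.diam_nonneg
  have hbdd : BddBelow {δ : ℝ | 0 < δ ∧ ∀ X : Set M, MeasurableSet X →
      μ X ≤ ν (Metric.thickening δ X) + ENNReal.ofReal δ ∧
      ν X ≤ μ (Metric.thickening δ X) + ENNReal.ofReal δ} :=
    ⟨0, fun δ hδ => hδ.1.le⟩
  have key : ∀ ε > 0, prohorovDist μ ν ≤ m + ε := by
    intro ε hε
    apply csInf_le hbdd
    refine ⟨by linarith, fun X hX => ?_⟩
    constructor
    · exact key_bound P hclopen hdisj hcover m (m + ε) hm (by linarith) μ ν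
        (fun a ha => by have := abs_le.mp (h a ha); linarith [this.2]) X hX
    · exact key_bound P hclopen hdisj hcover m (m + ε) hm (by linarith) ν μ
        (fun a ha => by have := abs_le.mp (h a ha); linarith [this.1]) X hX
  exact le_of_forall_pos_le_add key
end

section
/- Given 0 < δ < 1, there exists k₀ ∈ ℕ (independent of M, f, μ, ν) such that for any continuous map f of a compact metric space M, any Borel probability measures μ, ν on M, and any k ≥ k₀, there exists a δ-chain μ = μ₀, μ₁, …, μ_k of the induced map f̃ on ℳ(M) (i.e., d_P(μ_{i+1}, f̃(μ_i)) < δ for all i) with μ_k = f̃^k(ν). -/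
open MeasureTheory Metric Set
open scoped ENNReal

universe u

/-- Theorem (ChainC): given `0 < δ < 1` there is `k₀` such that for any continuous map `f`
of a compact metric space, any Borel probability measures `μ, ν` and any `k ≥ k₀`, there is
a `δ`-chain of the induced map `f̃` of length `k` starting at `μ` and ending at `f̃^k(ν)`. -/
theorem exists_chain_to_image {δ : ℝ} (hδ0 : 0 < δ) (hδ1 : δ < 1) :
    ∃ k₀ : ℕ, ∀ (M : Type u) [MetricSpace M] [CompactSpace M]
      [MeasurableSpace M] [BorelSpace M] (f : M → M), Continuous f →
      ∀ (μ ν : Measure M), IsProbabilityMeasure μ → IsProbabilityMeasure ν →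
      ∀ k ≥ k₀, ∃ c : ℕ → Measure M,
        (∀ i, IsProbabilityMeasure (c i)) ∧ c 0 = μ ∧
        (∀ i < k, prohorovDist (Measure.map f (c i)) (c (i + 1)) < δ) ∧
        c k = Measure.map f^[k] ν := by
  obtain ⟨k₀, hk₀⟩ : ∃ k₀ : ℕ, 2 / δ < k₀ := exists_nat_gt _
  refine ⟨k₀ + 1, ?_⟩
  intro M _ _ _ _ f hf μ ν hμ hν k hk
  have hk0 : 0 < k := lt_of_lt_of_le (Nat.succ_pos _) hk
  have hkR : (0:ℝ) < k := by positivity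
  have hkδ : (1:ℝ) / k < δ := by
    have h1 : (1:ℝ) / δ < k := by
      have : (1:ℝ)/δ ≤ 2/δ := by gcongr; norm_num
      calc (1:ℝ)/δ ≤ 2/δ := this
        _ < k₀ := hk₀
        _ ≤ k := by exact_mod_cast le_trans (Nat.le_succ _) hk
    rw [div_lt_iff₀ hkR]
    calc (1:ℝ) = δ * (1/δ) := by field_simp
      _ < δ * k := by exact mul_lt_mul_of_pos_left h1 hδ0
  have hkE0 : ((k:ℝ≥0∞)) ≠ 0 := by exact_mod_cast hk0.ne'
  have hkET : ((k:ℝ≥0∞)) ≠ ⊤ := ENNReal.natCast_ne_top k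
  have hfm : Measurable f := hf.measurable
  have hfim : ∀ i, Measurable f^[i] := fun i => (hf.iterate i).measurable
  set c : ℕ → Measure M := fun i =>
    (((k - min i k : ℕ) : ℝ≥0∞)/k) • Measure.map f^[i] μ +
    (((min i k : ℕ) : ℝ≥0∞)/k) • Measure.map f^[i] ν with hc
  have hmapμ : ∀ i, IsProbabilityMeasure (Measure.map f^[i] μ) := fun i =>
    Measure.isProbabilityMeasure_map (hfim i).aemeasurable
  have hmapν : ∀ i, IsProbabilityMeasure (Measure.map f^[i] ν) := fun i =>
    Measure.isProbabilityMeasure_map (hfim i).aemeasurable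
  have hprob : ∀ i, IsProbabilityMeasure (c i) := by
    intro i
    constructor
    have h1 := (hmapμ i).measure_univ
    have h2 := (hmapν i).measure_univ
    simp only [hc, Measure.add_apply, Measure.smul_apply, smul_eq_mul, h1, h2, mul_one]
    rw [ENNReal.div_add_div_same]
    have : ((k - min i k : ℕ) : ℝ≥0∞) + ((min i k : ℕ) : ℝ≥0∞) = (k : ℝ≥0∞) := by
      rw [← Nat.cast_add, Nat.sub_add_cancel (min_le_right i k)]
    rw [this, ENNReal.div_self hkE0 hkET]
  refine ⟨c, hprob, ?_, ?_, ?_⟩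
  · simp [hc, Nat.sub_zero, ENNReal.div_self hkE0 hkET]
  · intro i hik
    -- compute map f (c i)
    have hmap : Measure.map f (c i) =
        (((k - min i k : ℕ) : ℝ≥0∞)/k) • Measure.map f^[i+1] μ +
        (((min i k : ℕ) : ℝ≥0∞)/k) • Measure.map f^[i+1] ν := by
      rw [hc]
      simp only [Measure.map_add _ _ hfm, Measure.map_smul]
      rw [Measure.map_map hfm (hfim i), Measure.map_map hfm (hfim i),
        ← Function.iterate_succ' f i]
    have hmin1 : min i k = i := min_eq_left hik.le
    have hmin2 : min (i+1) k = i + 1 := min_eq_left hik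
    have hofr : ENNReal.ofReal ((1:ℝ)/k) = 1 / (k : ℝ≥0∞) := by
      rw [ENNReal.ofReal_div_of_pos hkR, ENNReal.ofReal_one, ENNReal.ofReal_natCast]
    have step : ∀ a b P Q : ℝ≥0∞, P ≤ 1 → Q ≤ 1 →
        (a + 1)/(k:ℝ≥0∞) * P + b/k * Q ≤ a/k * P + (b+1)/k * Q + 1/k := by
      intro a b P Q hP hQ
      have h1 : (1:ℝ≥0∞)/k * P ≤ 1/k :=
        le_trans (mul_le_mul_right hP _) (by rw [mul_one])
      calc (a+1)/(k:ℝ≥0∞) * P + b/k * Q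
          = a/k * P + b/k * Q + 1/k * P := by rw [ENNReal.add_div]; ring
        _ ≤ a/k * P + b/k * Q + 1/k := by gcongr
        _ ≤ a/k * P + (b+1)/k * Q + 1/k := by
            gcongr
            exact le_self_add
    have key : ∀ X : Set M, MeasurableSet X →
        (Measure.map f (c i)) X ≤ c (i+1) X + ENNReal.ofReal ((1:ℝ)/k) ∧
        c (i+1) X ≤ (Measure.map f (c i)) X + ENNReal.ofReal ((1:ℝ)/k) := by
      intro X _
      set P := Measure.map f^[i+1] μ X with hP
      set Q := Measure.map f^[i+1] ν X with hQ
      have hP1 : P ≤ 1 := prob_le_one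
      have hQ1 : Q ≤ 1 := prob_le_one
      have e1 : (Measure.map f (c i)) X =
          ((k - i : ℕ) : ℝ≥0∞)/k * P + ((i : ℕ) : ℝ≥0∞)/k * Q := by
        rw [hmap, hmin1]
        simp only [Measure.add_apply, Measure.smul_apply, smul_eq_mul]
        rfl
      have e2 : c (i+1) X = ((k - (i+1) : ℕ) : ℝ≥0∞)/k * P + ((i+1 : ℕ) : ℝ≥0∞)/k * Q := by
        rw [hc]
        simp only [hmin2, Measure.add_apply, Measure.smul_apply, smul_eq_mul]
        rfl
      have hsplit : ((k - i : ℕ) : ℝ≥0∞) = ((k - (i+1) : ℕ) : ℝ≥0∞) + 1 := by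
        have : k - i = (k - (i+1)) + 1 := by omega
        rw [this]; push_cast; ring
      have hsplit2 : ((i + 1 : ℕ) : ℝ≥0∞) = ((i : ℕ) : ℝ≥0∞) + 1 := by push_cast; ring
      rw [e1, e2, hofr, hsplit, hsplit2]
      constructor
      · exact step _ _ P Q hP1 hQ1
      · calc ((k - (i+1) : ℕ):ℝ≥0∞)/k * P + (((i:ℕ):ℝ≥0∞)+1)/k * Q
            = (((i:ℕ):ℝ≥0∞)+1)/k * Q + ((k - (i+1) : ℕ):ℝ≥0∞)/k * P := by ring
          _ ≤ ((i:ℕ):ℝ≥0∞)/k * Q + (((k - (i+1) : ℕ):ℝ≥0∞)+1)/k * P + 1/k :=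
              step _ _ Q P hQ1 hP1
          _ = (((k - (i+1) : ℕ):ℝ≥0∞)+1)/k * P + ((i:ℕ):ℝ≥0∞)/k * Q + 1/k := by ring
    have hmem : (1:ℝ)/k ∈ {δ : ℝ | 0 < δ ∧ ∀ X : Set M, MeasurableSet X →
        (Measure.map f (c i)) X ≤ c (i+1) (Metric.thickening δ X) + ENNReal.ofReal δ ∧
        c (i+1) X ≤ (Measure.map f (c i)) (Metric.thickening δ X) + ENNReal.ofReal δ} := by
      refine ⟨by positivity, fun X hX => ?_⟩
      obtain ⟨h1, h2⟩ := key X hX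
      have hsub : X ⊆ Metric.thickening ((1:ℝ)/k) X :=
        self_subset_thickening (by positivity) X
      exact ⟨h1.trans (add_le_add_left (measure_mono hsub) _),
        h2.trans (add_le_add_left (measure_mono hsub) _)⟩
    have : prohorovDist (Measure.map f (c i)) (c (i+1)) ≤ (1:ℝ)/k :=
      csInf_le ⟨0, fun x hx => hx.1.le⟩ hmem
    exact lt_of_le_of_lt this hkδ
  · simp [hc, min_self, Nat.sub_self, ENNReal.div_self hkE0 hkET]
end

section
/- For every homeomorphism h of a compact metric space M, the induced map h̃ on the space of Borel probability measures ℳ(M) (with the Prohorov metric) is chain mixing: for every δ > 0 and every pair μ, ν ∈ ℳ(M), there is k₀ ∈ ℕ such that for every k ≥ k₀ there exists a δ-chain of h̃ of length k from μ to ν. -/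
open MeasureTheory Metric Set
open scoped ENNReal

lemma prohorovDist_le {M : Type*} [MetricSpace M] [MeasurableSpace M]
    (α β : Measure M) (ε : ℝ) (hε : 0 < ε)
    (H : ∀ X : Set M, MeasurableSet X →
      α X ≤ β X + ENNReal.ofReal ε ∧ β X ≤ α X + ENNReal.ofReal ε) :
    prohorovDist α β ≤ ε := by
  apply csInf_le ⟨0, fun x hx => hx.1.le⟩
  refine ⟨hε, fun X hX => ?_⟩
  have h1 : β X ≤ β (Metric.thickening ε X) := measure_mono (self_subset_thickening hε X)
  have h2 : α X ≤ α (Metric.thickening ε X) := measure_mono (self_subset_thickening hε X)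
  exact ⟨(H X hX).1.trans (add_le_add_left h1 _), (H X hX).2.trans (add_le_add_left h2 _)⟩

lemma ennreal_step1 (C d e A B : ℝ≥0∞) (hA : A ≤ 1) :
    (C + d) * A + e * B ≤ (C * A + (e + d) * B) + d := by
  have h1 : (C + d) * A ≤ C * A + d := by
    rw [add_mul]
    gcongr
    exact mul_le_of_le_one_right zero_le hA
  have h2 : e * B ≤ (e + d) * B := by gcongr; exact le_self_add
  calc (C + d) * A + e * B ≤ (C * A + d) + (e + d) * B := add_le_add h1 h2
  _ = (C * A + (e + d) * B) + d := by ring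

lemma ennreal_step2 (C d e A B : ℝ≥0∞) (hB : B ≤ 1) :
    C * A + (e + d) * B ≤ ((C + d) * A + e * B) + d := by
  have h1 : (e + d) * B ≤ e * B + d := by
    rw [add_mul]
    gcongr
    exact mul_le_of_le_one_right zero_le hB
  have h2 : C * A ≤ (C + d) * A := by gcongr; exact le_self_add
  calc C * A + (e + d) * B ≤ (C + d) * A + (e * B + d) := add_le_add h2 h1
  _ = ((C + d) * A + e * B) + d := by ring

/-- For every homeomorphism `h` of a compact metric space, the induced map `h̃` on
probability measures is chain mixing. -/
theorem induced_chainMixing {M : Type*} [MetricSpace M] [CompactSpace M]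
    [MeasurableSpace M] [BorelSpace M] (h : M ≃ₜ M)
    (δ : ℝ) (hδ : 0 < δ) (μ ν : Measure M)
    [IsProbabilityMeasure μ] [IsProbabilityMeasure ν] :
    ∃ k₀ : ℕ, ∀ k ≥ k₀, ∃ c : ℕ → Measure M,
      (∀ i, IsProbabilityMeasure (c i)) ∧ c 0 = μ ∧ c k = ν ∧
      ∀ i < k, prohorovDist (Measure.map (⇑h) (c i)) (c (i + 1)) < δ := by
  have hmh : Measurable (⇑h) := h.continuous.measurable
  have hms : Measurable (⇑h.symm) := h.symm.continuous.measurable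
  refine ⟨⌈δ⁻¹⌉₊ + 1, fun k hk => ?_⟩
  have hk1 : 1 ≤ k := le_trans (Nat.le_add_left 1 _) hk
  have hkR : (0:ℝ) < k := by exact_mod_cast hk1
  have hinv : ((k:ℝ))⁻¹ < δ := by
    rw [inv_lt_comm₀ hkR hδ]
    calc δ⁻¹ ≤ (⌈δ⁻¹⌉₊ : ℝ) := Nat.le_ceil _
    _ < ((⌈δ⁻¹⌉₊ + 1 : ℕ) : ℝ) := by push_cast; linarith
    _ ≤ (k : ℝ) := by exact_mod_cast hk
  have hk0 : (k : ℝ≥0∞) ≠ 0 := by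
    exact_mod_cast Nat.one_le_iff_ne_zero.mp hk1
  have hktop : (k : ℝ≥0∞) ≠ ⊤ := ENNReal.natCast_ne_top k
  set c : ℕ → Measure M := fun i =>
    (((k - min i k : ℕ) : ℝ≥0∞) / k) • Measure.map ((⇑h)^[min i k]) μ +
    (((min i k : ℕ) : ℝ≥0∞) / k) • Measure.map ((⇑h.symm)^[k - min i k]) ν with hc
  have hprob : ∀ i, IsProbabilityMeasure (c i) := by
    intro i
    have hjk : min i k ≤ k := min_le_right _ _
    constructor
    have h1 : (Measure.map ((⇑h)^[min i k]) μ) Set.univ = 1 := by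
      rw [Measure.map_apply (hmh.iterate _) MeasurableSet.univ]; simp
    have h2 : (Measure.map ((⇑h.symm)^[k - min i k]) ν) Set.univ = 1 := by
      rw [Measure.map_apply (hms.iterate _) MeasurableSet.univ]; simp
    simp only [hc, Measure.coe_add, Pi.add_apply, Measure.smul_apply, smul_eq_mul, h1, h2,
      mul_one]
    rw [ENNReal.div_add_div_same, ← Nat.cast_add, Nat.sub_add_cancel hjk,
      ENNReal.div_self hk0 hktop]
  have hc0 : c 0 = μ := by
    simp [hc, ENNReal.div_self hk0 hktop, Measure.map_id]
  have hck : c k = ν := by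
    simp [hc, ENNReal.div_self hk0 hktop, Measure.map_id]
  refine ⟨c, hprob, hc0, hck, fun i hik => ?_⟩
  have hi1 : i + 1 ≤ k := hik
  have hmini : min i k = i := min_eq_left hik.le
  have hmini1 : min (i+1) k = i + 1 := min_eq_left hi1
  have hmap : Measure.map (⇑h) (c i) =
      (((k - i : ℕ) : ℝ≥0∞) / k) • Measure.map ((⇑h)^[i+1]) μ +
      (((i : ℕ) : ℝ≥0∞) / k) • Measure.map ((⇑h.symm)^[k - (i+1)]) ν := by
    have e1 : Measure.map (⇑h) (Measure.map ((⇑h)^[i]) μ) = Measure.map ((⇑h)^[i+1]) μ := by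
      rw [Measure.map_map hmh (hmh.iterate _), ← Function.iterate_succ']
    have e2 : Measure.map (⇑h) (Measure.map ((⇑h.symm)^[k - i]) ν)
        = Measure.map ((⇑h.symm)^[k - (i+1)]) ν := by
      rw [Measure.map_map hmh (hms.iterate _)]
      congr 1
      have hki : k - i = (k - (i+1)) + 1 := by omega
      rw [hki, Function.iterate_succ']
      funext x
      simp
    rw [hc]
    simp only [hmini]
    rw [Measure.map_add _ _ hmh, Measure.map_smul, Measure.map_smul, e1, e2]
  have key : ∀ X : Set M, MeasurableSet X →
      (Measure.map (⇑h) (c i)) X ≤ (c (i+1)) X + ENNReal.ofReal ((k:ℝ)⁻¹) ∧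
      (c (i+1)) X ≤ (Measure.map (⇑h) (c i)) X + ENNReal.ofReal ((k:ℝ)⁻¹) := by
    intro X hX
    have hAinst : IsProbabilityMeasure (Measure.map ((⇑h)^[i+1]) μ) :=
      Measure.isProbabilityMeasure_map (hmh.iterate _).aemeasurable
    have hBinst : IsProbabilityMeasure (Measure.map ((⇑h.symm)^[k - (i+1)]) ν) :=
      Measure.isProbabilityMeasure_map (hms.iterate _).aemeasurable
    set A := (Measure.map ((⇑h)^[i+1]) μ) X with hA
    set B := (Measure.map ((⇑h.symm)^[k - (i+1)]) ν) X with hB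
    have hA1 : A ≤ 1 := prob_le_one
    have hB1 : B ≤ 1 := prob_le_one
    have hof : ENNReal.ofReal ((k:ℝ)⁻¹) = 1 / (k : ℝ≥0∞) := by
      rw [ENNReal.ofReal_inv_of_pos hkR, ENNReal.ofReal_natCast, one_div]
    have hLHS : (Measure.map (⇑h) (c i)) X =
        (((k - i : ℕ) : ℝ≥0∞) / k) * A + (((i : ℕ) : ℝ≥0∞) / k) * B := by
      rw [hmap]
      simp only [Measure.coe_add, Pi.add_apply, Measure.smul_apply, smul_eq_mul, hA, hB]
    have hRHS : (c (i+1)) X =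
        (((k - (i+1) : ℕ) : ℝ≥0∞) / k) * A + (((i+1 : ℕ) : ℝ≥0∞) / k) * B := by
      rw [hc]
      simp only [hmini1, Measure.coe_add, Pi.add_apply, Measure.smul_apply, smul_eq_mul,
        hA, hB]
    have hsplit : ((k - i : ℕ) : ℝ≥0∞) / k = ((k - (i+1) : ℕ) : ℝ≥0∞) / k + 1 / k := by
      rw [ENNReal.div_add_div_same]
      congr 1
      have hh : (k - i : ℕ) = (k - (i+1)) + 1 := by omega
      rw [hh, Nat.cast_add, Nat.cast_one]
    have hsplit2 : ((i+1 : ℕ) : ℝ≥0∞) / k = ((i : ℕ) : ℝ≥0∞) / k + 1 / k := by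
      rw [ENNReal.div_add_div_same, Nat.cast_add, Nat.cast_one]
    rw [hLHS, hRHS, hof, hsplit, hsplit2]
    exact ⟨ennreal_step1 _ _ _ _ _ hA1, ennreal_step2 _ _ _ _ _ hB1⟩
  calc prohorovDist (Measure.map (⇑h) (c i)) (c (i+1)) ≤ (k:ℝ)⁻¹ :=
        prohorovDist_le _ _ _ (by positivity) key
    _ < δ := hinv
end

section
/- If f is a continuous self-map of a compact metric space M such that the intersection ⋂_{n≥1} f^n(M) is a singleton {a}, then f is chain continuous at every point of M. -/
open Metric Set

/-- Finite-time shadowing: δ-chains stay ε-close to true orbits for `L` steps. -/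
lemma shadow_finite {M : Type*} [MetricSpace M] [CompactSpace M]
    (f : M → M) (hf : Continuous f) :
    ∀ L : ℕ, ∀ ε > 0, ∃ δ > 0, δ ≤ ε ∧ ∀ (c : ℕ → M) (y : M),
      dist (c 0) y < δ → (∀ n, dist (c (n + 1)) (f (c n)) < δ) →
      ∀ n ≤ L, dist (c n) (f^[n] y) < ε := by
  intro L
  induction L with
  | zero =>
    intro ε hε
    refine ⟨ε, hε, le_refl _, ?_⟩
    intro c y h0 _ n hn
    interval_cases n
    simpa using h0
  | succ L ih =>
    intro ε hε
    have huc : UniformContinuous f := CompactSpace.uniformContinuous_of_continuous hf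
    obtain ⟨η0, hη0, hη0p⟩ := Metric.uniformContinuous_iff.mp huc (ε / 2) (by linarith)
    set η := min η0 (ε / 2) with hηdef
    have hη : 0 < η := lt_min hη0 (by linarith)
    obtain ⟨δ, hδ, hδη, hP⟩ := ih η hη
    refine ⟨δ, hδ, hδη.trans ((min_le_right _ _).trans (by linarith)), ?_⟩
    intro c y h0 hc n hn
    rcases Nat.lt_or_ge n (L + 1) with h | h
    · have := hP c y h0 hc n (Nat.lt_succ_iff.mp h)
      calc dist (c n) (f^[n] y) < η := this
        _ ≤ ε := (min_le_right _ _).trans (by linarith)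
    · have hn' : n = L + 1 := le_antisymm hn h
      subst hn'
      have h1 : dist (c (L + 1)) (f (c L)) < δ := hc L
      have h2 : dist (c L) (f^[L] y) < η := hP c y h0 hc L le_rfl
      have h3 : dist (f (c L)) (f (f^[L] y)) < ε / 2 :=
        hη0p (lt_of_lt_of_le h2 (min_le_left _ _))
      have h4 : f^[L + 1] y = f (f^[L] y) := Function.iterate_succ_apply' f L y
      calc dist (c (L + 1)) (f^[L + 1] y)
          ≤ dist (c (L + 1)) (f (c L)) + dist (f (c L)) (f^[L + 1] y) := dist_triangle _ _ _
        _ < δ + ε / 2 := by rw [h4]; exact add_lt_add h1 h3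
        _ ≤ ε := by
            have : δ ≤ ε / 2 := hδη.trans ((min_le_right _ _))
            linarith

lemma eventually_small {M : Type*} [MetricSpace M] [CompactSpace M]
    (f : M → M) (hf : Continuous f) (a : M)
    (ha : (⋂ n : ℕ, f^[n + 1] '' Set.univ) = {a}) :
    ∀ ε > 0, ∃ N : ℕ, ∀ y, dist (f^[N + 1] y) a < ε := by
  intro ε hε
  set K : ℕ → Set M := fun n => f^[n + 1] '' Set.univ with hK
  have hKc : ∀ n, IsCompact (K n) := fun n =>
    isCompact_univ.image (hf.iterate (n + 1))
  have hKanti : Antitone K := by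
    apply antitone_nat_of_succ_le
    intro n
    have : f^[n + 1 + 1] = f^[n + 1] ∘ f := Function.iterate_succ f (n + 1)
    simp only [hK, this, Set.image_comp]
    exact Set.image_mono (Set.subset_univ _)
  have hs : IsCompact ((Metric.ball a ε)ᶜ) :=
    (Metric.isOpen_ball.isClosed_compl).isCompact
  have hst : (Metric.ball a ε)ᶜ ∩ ⋂ n, K n = ∅ := by
    rw [ha]
    ext z
    simp only [Set.mem_inter_iff, Set.mem_compl_iff, Metric.mem_ball, Set.mem_singleton_iff,
      Set.mem_empty_iff_false, iff_false, not_and]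
    rintro hz rfl
    exact hz (by simpa using hε)
  obtain ⟨N, hN⟩ := hs.elim_directed_family_closed K (fun n => (hKc n).isClosed) hst
    (hKanti.directed_ge)
  refine ⟨N, fun y => ?_⟩
  have hy : f^[N + 1] y ∈ K N := ⟨y, Set.mem_univ y, rfl⟩
  by_contra h
  have : f^[N + 1] y ∈ (Metric.ball a ε)ᶜ ∩ K N := ⟨by simpa using h, hy⟩
  rw [hN] at this
  exact this

/-- Lemma: if `⋂_{n ≥ 1} f^n(M)` is a singleton `{a}`, then `f` is chain continuous
at every point. -/
theorem chainContinuous_of_iInter_singleton {M : Type*} [MetricSpace M] [CompactSpace M]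
    (f : M → M) (hf : Continuous f) (a : M)
    (ha : (⋂ n : ℕ, f^[n + 1] '' Set.univ) = {a}) :
    ∀ x : M, ∀ ε > 0, ∃ δ > 0, ∀ c : ℕ → M,
      dist (c 0) x < δ → (∀ n : ℕ, dist (c (n + 1)) (f (c n)) < δ) →
      ∀ n : ℕ, dist (c n) (f^[n] x) < ε := by
  intro x ε hε
  obtain ⟨N, hN⟩ := eventually_small f hf a ha (ε / 4) (by linarith)
  obtain ⟨δ, hδ, hδε, hP⟩ := shadow_finite f hf (N + 1) (ε / 4) (by linarith)
  refine ⟨δ, hδ, ?_⟩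
  intro c h0 hc n
  rcases Nat.lt_or_ge n (N + 2) with h | h
  · have := hP c x h0 hc n (Nat.lt_succ_iff.mp h)
    linarith
  ·
    obtain ⟨m, rfl⟩ : ∃ m, n = m + (N + 1) := ⟨n - (N + 1), by omega⟩
    -- shifted chain
    set c' : ℕ → M := fun k => c (k + m) with hc'
    have h0' : dist (c' 0) (c m) < δ := by simp [hc', hδ]
    have hcc' : ∀ k, dist (c' (k + 1)) (f (c' k)) < δ := by
      intro k
      have := hc (k + m)
      simpa [hc', Nat.add_right_comm] using this
    have hshade : dist (c' (N + 1)) (f^[N + 1] (c m)) < ε / 4 :=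
      hP c' (c m) h0' hcc' (N + 1) le_rfl
    have h1 : dist (c (m + (N + 1))) a < ε / 2 := by
      have : c' (N + 1) = c (m + (N + 1)) := by simp [hc', Nat.add_comm]
      rw [this] at hshade
      calc dist (c (m + (N + 1))) a
          ≤ dist (c (m + (N + 1))) (f^[N + 1] (c m)) + dist (f^[N + 1] (c m)) a :=
            dist_triangle _ _ _
        _ < ε / 4 + ε / 4 := add_lt_add hshade (hN (c m))
        _ = ε / 2 := by ring
    have h2 : dist (f^[m + (N + 1)] x) a < ε / 4 := by
      have : f^[m + (N + 1)] x = f^[N + 1] (f^[m] x) := by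
        rw [Nat.add_comm, Function.iterate_add_apply]
      rw [this]; exact hN _
    calc dist (c (m + (N + 1))) (f^[m + (N + 1)] x)
        ≤ dist (c (m + (N + 1))) a + dist a (f^[m + (N + 1)] x) := dist_triangle _ _ _
      _ < ε / 2 + ε / 4 := add_lt_add h1 (by rw [dist_comm]; exact h2)
      _ < ε := by linarith
end

section
/- Let f be a continuous self-map of a compact metric space M. If ⋂_{n≥1} f^n(M) = {a} is a singleton, then ⋂_{n≥1} f̃^n(ℳ(M)) = {π_a}, where π_a is the Dirac measure at a. -/
open MeasureTheory Metric Set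

lemma eq_dirac_of_singleton_full {M : Type*} [MeasurableSpace M]
    [MeasurableSingletonClass M] {μ : Measure M} [IsProbabilityMeasure μ] {a : M}
    (h : μ {a} = 1) : μ = Measure.dirac a := by
  have hc : μ {a}ᶜ = 0 := by
    rw [prob_compl_eq_zero_iff (measurableSet_singleton a)]; exact h
  ext s hs
  rw [Measure.dirac_apply' _ hs]
  by_cases has : a ∈ s
  · have h1 : μ s ≤ 1 := prob_le_one
    have h2 : (1 : ENNReal) = μ {a} := h.symm
    have h3 : μ {a} ≤ μ s := measure_mono (by simpa using has)
    simp [Set.indicator_of_mem has, le_antisymm h1 (h2 ▸ h3)]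
  · have : μ s ≤ μ {a}ᶜ := measure_mono (fun x hx => by
      simp only [mem_compl_iff, mem_singleton_iff]
      rintro rfl; exact has hx)
    simp [Set.indicator_of_notMem has, le_antisymm (this.trans hc.le) zero_le]

/-- If `⋂_{n ≥ 1} f^n(M) = {a}`, then `⋂_{n ≥ 1} f̃^n(ℳ(M)) = {π_a}`. -/
theorem iInter_image_induced_eq_dirac {M : Type*} [MetricSpace M] [CompactSpace M]
    [MeasurableSpace M] [BorelSpace M]
    (f : M → M) (hf : Continuous f) (a : M)
    (ha : (⋂ n : ℕ, f^[n + 1] '' Set.univ) = {a}) :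
    (⋂ n : ℕ, (fun μ : Measure M => Measure.map f^[n + 1] μ) ''
      {μ : Measure M | IsProbabilityMeasure μ}) = {Measure.dirac a} := by
  have hfm : ∀ n : ℕ, Measurable f^[n + 1] := fun n => (hf.iterate _).measurable
  apply Set.eq_singleton_iff_unique_mem.mpr
  constructor
  · -- dirac a is in every image
    refine Set.mem_iInter.mpr fun n => ?_
    have haim : a ∈ f^[n + 1] '' Set.univ := by
      have : a ∈ ⋂ n : ℕ, f^[n + 1] '' Set.univ := by rw [ha]; exact rfl
      exact Set.mem_iInter.mp this n
    obtain ⟨b, -, hb⟩ := haim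
    exact ⟨Measure.dirac b, ⟨by simp⟩, by
      simp only [Measure.map_dirac' (hfm n), hb]⟩
  · -- uniqueness
    intro μ hμ
    have hprob : IsProbabilityMeasure μ := by
      obtain ⟨ν, hν, hmap⟩ := Set.mem_iInter.mp hμ 0
      haveI : IsProbabilityMeasure ν := hν
      rw [← hmap]
      exact Measure.isProbabilityMeasure_map (hfm 0).aemeasurable
    -- μ vanishes on complement of each image
    have hK : ∀ n : ℕ, μ (f^[n + 1] '' Set.univ)ᶜ = 0 := by
      intro n
      obtain ⟨ν, hν, hmap⟩ := Set.mem_iInter.mp hμ n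
      have hKc : IsCompact (f^[n + 1] '' Set.univ) :=
        isCompact_univ.image (hf.iterate _)
      rw [← hmap, Measure.map_apply (hfm n) hKc.isClosed.measurableSet.compl,
        show f^[n + 1] ⁻¹' (f^[n + 1] '' Set.univ)ᶜ = ∅ from
          Set.eq_empty_iff_forall_notMem.mpr fun x hx => hx ⟨x, trivial, rfl⟩,
        measure_empty]
    have hsing : μ {a}ᶜ = 0 := by
      rw [← ha, Set.compl_iInter]
      exact measure_iUnion_null hK
    have h1 : μ {a} = 1 :=
      (prob_compl_eq_zero_iff (measurableSet_singleton a)).mp hsing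
    exact eq_dirac_of_singleton_full h1
end

section
/- For a continuous self-map f of a compact metric space M, the following are equivalent: (i) the induced map f̃ on ℳ(M) is chain continuous at some point; (ii) f̃ is chain continuous at every point; (iii) ⋂_{n≥1} f^n(M) is a singleton. -/
open MeasureTheory Metric Set

/-- `f̃` is chain continuous at a probability measure `μ` (w.r.t. the Prohorov metric). -/
def InducedChainContinuousAt {M : Type*} [MetricSpace M] [MeasurableSpace M]
    (f : M → M) (μ : Measure M) : Prop :=
  ∀ ε > (0 : ℝ), ∃ δ > (0 : ℝ), ∀ c : ℕ → Measure M,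
    (∀ i, IsProbabilityMeasure (c i)) →
    prohorovDist (c 0) μ < δ →
    (∀ n : ℕ, prohorovDist (c (n + 1)) (Measure.map f (c n)) < δ) →
    ∀ n : ℕ, prohorovDist (c n) (Measure.map f^[n] μ) < ε

namespace ProhorovAux

variable {M : Type*} [MetricSpace M] [MeasurableSpace M] [OpensMeasurableSpace M] {μ ν κ : Measure M} {δ δ' α β : ℝ}

/-- The defining predicate of the Prohorov distance. -/
def PD (μ ν : Measure M) (δ : ℝ) : Prop :=
  0 < δ ∧ ∀ X : Set M, MeasurableSet X →
    μ X ≤ ν (Metric.thickening δ X) + ENNReal.ofReal δ ∧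
    ν X ≤ μ (Metric.thickening δ X) + ENNReal.ofReal δ

lemma prohorov_eq (μ ν : Measure M) : prohorovDist μ ν = sInf {δ | PD μ ν δ} := rfl

lemma PD.mono (h : PD μ ν δ) (hle : δ ≤ δ') : PD μ ν δ' := by
  refine ⟨lt_of_lt_of_le h.1 hle, fun X hX => ?_⟩
  obtain ⟨h1, h2⟩ := h.2 X hX
  exact ⟨h1.trans (add_le_add (measure_mono (thickening_mono hle X))
      (ENNReal.ofReal_le_ofReal hle)),
    h2.trans (add_le_add (measure_mono (thickening_mono hle X))
      (ENNReal.ofReal_le_ofReal hle))⟩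

lemma PD.symm (h : PD μ ν δ) : PD ν μ δ :=
  ⟨h.1, fun X hX => ⟨(h.2 X hX).2, (h.2 X hX).1⟩⟩

lemma PD_of_prob [IsProbabilityMeasure μ] [IsProbabilityMeasure ν] (hδ : 1 ≤ δ) :
    PD μ ν δ := by
  refine ⟨lt_of_lt_of_le one_pos hδ, fun X hX => ?_⟩
  have h1 : (1 : ENNReal) ≤ ENNReal.ofReal δ := ENNReal.one_le_ofReal.2 hδ
  constructor
  · exact le_trans prob_le_one (le_trans h1 le_add_self)
  · exact le_trans prob_le_one (le_trans h1 le_add_self)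

lemma PD_bdd : BddBelow {δ | PD μ ν δ} := ⟨0, fun x hx => hx.1.le⟩

lemma prohorov_le (h : PD μ ν δ) : prohorovDist μ ν ≤ δ := csInf_le PD_bdd h

lemma PD_of_lt [IsProbabilityMeasure μ] [IsProbabilityMeasure ν]
    (h : prohorovDist μ ν < δ) : PD μ ν δ := by
  obtain ⟨s, hs, hsδ⟩ := (csInf_lt_iff PD_bdd ⟨1, PD_of_prob le_rfl⟩).1 h
  exact PD.mono hs hsδ.le

lemma PD.trans (h1 : PD μ ν α) (h2 : PD ν κ β) : PD μ κ (α + β) := by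
  have hαβ : (0:ℝ) < α + β := add_pos h1.1 h2.1
  have hth : ∀ X : Set M, Metric.thickening β (Metric.thickening α X) ⊆
      Metric.thickening (α + β) X := fun X => by
    simpa [add_comm] using thickening_thickening_subset β α X
  have hof : ENNReal.ofReal α + ENNReal.ofReal β = ENNReal.ofReal (α + β) :=
    (ENNReal.ofReal_add h1.1.le h2.1.le).symm
  refine ⟨hαβ, fun X hX => ⟨?_, ?_⟩⟩
  · calc μ X ≤ ν (Metric.thickening α X) + ENNReal.ofReal α := (h1.2 X hX).1
      _ ≤ (κ (Metric.thickening β (Metric.thickening α X)) + ENNReal.ofReal β)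
            + ENNReal.ofReal α :=
        add_le_add_left (h2.2 _ isOpen_thickening.measurableSet).1 _
      _ ≤ κ (Metric.thickening (α + β) X) + ENNReal.ofReal (α + β) := by
        rw [← hof]; rw [add_assoc]
        exact add_le_add (measure_mono (hth X)) (by rw [add_comm])
  · calc κ X ≤ ν (Metric.thickening β X) + ENNReal.ofReal β := (h2.2 X hX).2
      _ ≤ (μ (Metric.thickening α (Metric.thickening β X)) + ENNReal.ofReal α)
            + ENNReal.ofReal β :=
        add_le_add_left (h1.2 _ isOpen_thickening.measurableSet).2 _
      _ ≤ μ (Metric.thickening (α + β) X) + ENNReal.ofReal (α + β) := by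
        rw [← hof]; rw [add_assoc]
        refine add_le_add (measure_mono ?_) le_rfl
        simpa [add_comm] using thickening_thickening_subset α β X

lemma PD_of_TV (hδ : 0 < δ)
    (h : ∀ X : Set M, MeasurableSet X →
      μ X ≤ ν X + ENNReal.ofReal δ ∧ ν X ≤ μ X + ENNReal.ofReal δ) : PD μ ν δ := by
  refine ⟨hδ, fun X hX => ?_⟩
  obtain ⟨h1, h2⟩ := h X hX
  exact ⟨h1.trans (add_le_add_left (measure_mono (self_subset_thickening hδ X)) _),
    h2.trans (add_le_add_left (measure_mono (self_subset_thickening hδ X)) _)⟩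

lemma prohorov_self_lt (μ : Measure M) (hδ : 0 < δ) : prohorovDist μ μ < δ := by
  have : PD μ μ (δ/2) := PD_of_TV (by linarith) (fun X hX => ⟨le_add_right le_rfl, le_add_right le_rfl⟩)
  exact lt_of_le_of_lt (prohorov_le this) (by linarith)

end ProhorovAux

namespace ProhorovAux

variable {M : Type*} [MetricSpace M] [MeasurableSpace M] [OpensMeasurableSpace M]
  {μ ν κ : Measure M} {δ δ' α β : ℝ}

lemma dist_lt_of_PD_dirac {p q : M} (h : PD (Measure.dirac p) (Measure.dirac q) δ)
    (hδ : δ < 1) : dist q p < δ := by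
  have hs : MeasurableSet ({p} : Set M) := measurableSet_singleton p
  have h1 := (h.2 {p} hs).1
  rw [Measure.dirac_apply' _ hs] at h1
  rw [Set.indicator_of_mem (mem_singleton p), Pi.one_apply] at h1
  have hth : MeasurableSet (Metric.thickening δ ({p} : Set M)) :=
    isOpen_thickening.measurableSet
  rw [Measure.dirac_apply' _ hth] at h1
  by_cases hq : q ∈ Metric.thickening δ ({p} : Set M)
  · rw [mem_thickening_iff] at hq
    obtain ⟨z, hz, hd⟩ := hq
    rw [mem_singleton_iff] at hz
    rwa [hz] at hd
  · rw [Set.indicator_of_notMem hq, zero_add] at h1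
    exact absurd (lt_of_le_of_lt h1 (ENNReal.ofReal_lt_one.2 hδ)) (lt_irrefl _)

variable [CompactSpace M] [BorelSpace M]

lemma map_modulus (f : M → M) (hf : Continuous f) {η : ℝ} (hη : 0 < η) :
    ∃ δ, 0 < δ ∧ δ ≤ η ∧ ∀ (μ ν : Measure M), PD μ ν δ →
      PD (Measure.map f μ) (Measure.map f ν) η := by
  obtain ⟨δ₀, hδ₀, hd⟩ :=
    Metric.uniformContinuous_iff.1 (CompactSpace.uniformContinuous_of_continuous hf) η hη
  have hfm : Measurable f := hf.measurable
  refine ⟨min δ₀ η, lt_min hδ₀ hη, min_le_right _ _, fun μ ν h => ?_⟩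
  have hsub : ∀ X : Set M, Metric.thickening (min δ₀ η) (f ⁻¹' X) ⊆
      f ⁻¹' (Metric.thickening η X) := by
    intro X y hy
    rw [mem_thickening_iff] at hy
    obtain ⟨z, hz, hd'⟩ := hy
    have : dist (f y) (f z) < η := hd (lt_of_lt_of_le hd' (min_le_left _ _))
    exact mem_thickening_iff.2 ⟨f z, hz, this⟩
  have hofr : ENNReal.ofReal (min δ₀ η) ≤ ENNReal.ofReal η :=
    ENNReal.ofReal_le_ofReal (min_le_right _ _)
  refine ⟨hη, fun X hX => ?_⟩
  rw [Measure.map_apply hfm hX, Measure.map_apply hfm hX,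
    Measure.map_apply hfm isOpen_thickening.measurableSet,
    Measure.map_apply hfm isOpen_thickening.measurableSet]
  obtain ⟨h1, h2⟩ := h.2 (f ⁻¹' X) (hfm hX)
  constructor
  · exact h1.trans (add_le_add (measure_mono ((thickening_mono le_rfl _).trans (hsub X))) hofr)
  · exact h2.trans (add_le_add (measure_mono ((thickening_mono le_rfl _).trans (hsub X))) hofr)

lemma fin_steps (f : M → M) (hf : Continuous f) :
    ∀ (N : ℕ) (ε : ℝ), 0 < ε → ∃ δ, 0 < δ ∧ δ ≤ ε ∧
      ∀ (μ : Measure M) (c : ℕ → Measure M), IsProbabilityMeasure μ →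
        (∀ i, IsProbabilityMeasure (c i)) →
        prohorovDist (c 0) μ < δ →
        (∀ n, prohorovDist (c (n+1)) (Measure.map f (c n)) < δ) →
        ∀ n ≤ N, prohorovDist (c n) (Measure.map f^[n] μ) < ε := by
  intro N
  induction N with
  | zero =>
    intro ε hε
    refine ⟨ε, hε, le_rfl, fun μ c hμ hc h0 hch n hn => ?_⟩
    interval_cases n
    simpa [Measure.map_id] using h0
  | succ N IH =>
    intro ε hε
    obtain ⟨ρ, hρ0, hρη, hmod⟩ := map_modulus f hf (half_pos hε)
    obtain ⟨δ₂, hδ₂0, hδ₂ρ, hIH⟩ := IH ρ hρ0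
    refine ⟨min δ₂ (ε/4), lt_min hδ₂0 (by linarith), (min_le_right _ _).trans (by linarith),
      fun μ c hμ hc h0 hch n hn => ?_⟩
    haveI := hμ
    haveI := fun i => hc i
    have hfm : Measurable f := hf.measurable
    haveI : ∀ k : ℕ, IsProbabilityMeasure (Measure.map f^[k] μ) := fun k =>
      Measure.isProbabilityMeasure_map (hfm.iterate k).aemeasurable
    have h0' : prohorovDist (c 0) μ < δ₂ := lt_of_lt_of_le h0 (min_le_left _ _)
    have hch' : ∀ n, prohorovDist (c (n+1)) (Measure.map f (c n)) < δ₂ := fun n =>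
      lt_of_lt_of_le (hch n) (min_le_left _ _)
    rcases Nat.lt_succ_iff_lt_or_eq.1 (Nat.lt_succ_of_le hn) with hlt | heq
    · exact lt_of_lt_of_le (hIH μ c hμ hc h0' hch' n (Nat.lt_succ_iff.1 hlt))
        (by linarith)
    · subst heq
      have hN : prohorovDist (c N) (Measure.map f^[N] μ) < ρ :=
        hIH μ c hμ hc h0' hch' N le_rfl
      have h1 : PD (Measure.map f (c N)) (Measure.map f (Measure.map f^[N] μ)) (ε/2) :=
        hmod _ _ (PD_of_lt hN)
      haveI : IsProbabilityMeasure (Measure.map f (c N)) :=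
        Measure.isProbabilityMeasure_map hfm.aemeasurable
      have h2 : PD (c (N+1)) (Measure.map f (c N)) (ε/4) :=
        PD_of_lt (lt_of_lt_of_le (hch N) (min_le_right _ _))
      have hmm : Measure.map f (Measure.map f^[N] μ) = Measure.map f^[N+1] μ := by
        rw [Measure.map_map hfm (hfm.iterate N), ← Function.iterate_succ' f N]
      rw [hmm] at h1
      exact lt_of_le_of_lt (prohorov_le (h2.trans h1)) (by linarith)

section Sets

variable (f : M → M)

/-- `Kset f n = fⁿ(M)`. -/
def Kset (n : ℕ) : Set M := f^[n] '' univ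

/-- The `δ`-fattened iterated images. -/
def Sset (δ : ℝ) : ℕ → Set M
  | 0 => univ
  | k+1 => cthickening δ (f '' Sset δ k)

variable {f}

lemma Kset_succ (k : ℕ) : Kset f (k+1) = f '' Kset f k := by
  rw [Kset, Kset, Function.iterate_succ', Set.image_comp]

lemma Kset_antitone : Antitone (Kset f) := by
  refine antitone_nat_of_succ_le fun n => ?_
  rw [Kset, Kset, Function.iterate_succ, Set.image_comp]
  exact Set.image_mono (Set.subset_univ _)

lemma Kset_compact (hf : Continuous f) (n : ℕ) : IsCompact (Kset f n) :=
  isCompact_univ.image (hf.iterate n)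

lemma Kset_nonempty [Nonempty M] (n : ℕ) : (Kset f n).Nonempty :=
  Set.Nonempty.image _ univ_nonempty

lemma Sset_closed (δ : ℝ) (k : ℕ) : IsClosed (Sset f δ k) := by
  cases k with
  | zero => exact isClosed_univ
  | succ k => exact isClosed_cthickening

lemma Sset_subset_cthickening [Nonempty M] (hf : Continuous f) :
    ∀ (k : ℕ) (η : ℝ), 0 < η → ∃ δ, 0 < δ ∧ ∀ δ', 0 < δ' → δ' ≤ δ →
      Sset f δ' k ⊆ cthickening η (Kset f k) := by
  intro k
  induction k with
  | zero =>
    intro η hη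
    refine ⟨1, one_pos, fun δ' _ _ => ?_⟩
    have : (univ : Set M) ⊆ cthickening η (univ : Set M) := self_subset_cthickening _
    simpa [Sset, Kset] using this
  | succ k IH =>
    intro η hη
    obtain ⟨ρ₀, hρ₀, hdc⟩ := Metric.uniformContinuous_iff.1
      (CompactSpace.uniformContinuous_of_continuous hf) (η/2) (by linarith)
    obtain ⟨δ₀, hδ₀, hIH⟩ := IH (ρ₀/2) (by linarith)
    refine ⟨min δ₀ (η/2), lt_min hδ₀ (by linarith), fun δ' hδ'0 hδ' => ?_⟩
    have h1 : Sset f δ' (k+1) ⊆ cthickening (η/2) (f '' cthickening (ρ₀/2) (Kset f k)) := by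
      refine (cthickening_mono (hδ'.trans (min_le_right _ _)) _).trans ?_
      exact cthickening_subset_of_subset _
        (Set.image_mono (hIH δ' hδ'0 (hδ'.trans (min_le_left _ _))))
    have h2 : f '' cthickening (ρ₀/2) (Kset f k) ⊆ cthickening (η/2) (f '' Kset f k) := by
      rintro _ ⟨x, hx, rfl⟩
      obtain ⟨y, hy, hxy⟩ := (Kset_compact hf k).exists_infEdist_eq_edist (Kset_nonempty k) x
      rw [mem_cthickening_iff, hxy, edist_dist] at hx
      have hd : dist x y ≤ ρ₀/2 := (ENNReal.ofReal_le_ofReal_iff (by linarith)).1 hx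
      have : dist (f x) (f y) < η/2 := hdc (lt_of_le_of_lt hd (by linarith))
      rw [mem_cthickening_iff]
      refine le_trans (EMetric.infEdist_le_edist_of_mem (Set.mem_image_of_mem f hy)) ?_
      rw [edist_dist]
      exact ENNReal.ofReal_le_ofReal this.le
    calc Sset f δ' (k+1) ⊆ cthickening (η/2) (f '' cthickening (ρ₀/2) (Kset f k)) := h1
      _ ⊆ cthickening (η/2) (cthickening (η/2) (f '' Kset f k)) :=
        cthickening_subset_of_subset _ h2
      _ ⊆ cthickening (η/2 + η/2) (f '' Kset f k) :=
        cthickening_cthickening_subset (by linarith) (by linarith) _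
      _ = cthickening η (Kset f (k+1)) := by rw [Kset_succ]; norm_num

lemma chain_prop (hf : Continuous f) {δ : ℝ} (hδ : 0 < δ)
    (c : ℕ → Measure M) (hc : ∀ i, IsProbabilityMeasure (c i))
    (hch : ∀ n, prohorovDist (c (n+1)) (Measure.map f (c n)) < δ) :
    ∀ k, 1 ≤ c k (Sset f δ k) + k * ENNReal.ofReal δ := by
  intro k
  induction k with
  | zero =>
    haveI := hc 0
    simp [Sset]
  | succ k IH =>
    haveI := hc k
    haveI := hc (k+1)
    haveI : IsProbabilityMeasure (Measure.map f (c k)) :=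
      Measure.isProbabilityMeasure_map hf.measurable.aemeasurable
    have hPD : PD (c (k+1)) (Measure.map f (c k)) δ := PD_of_lt (hch k)
    have hScomp : IsCompact (Sset f δ k) := (Sset_closed δ k).isCompact
    have hY : MeasurableSet (f '' Sset f δ k) :=
      ((hScomp.image hf).isClosed).measurableSet
    have h2 := (hPD.2 _ hY).2
    rw [Measure.map_apply hf.measurable hY] at h2
    have hstep : c k (Sset f δ k) ≤ c (k+1) (Sset f δ (k+1)) + ENNReal.ofReal δ := by
      refine le_trans (measure_mono (Set.subset_preimage_image f _)) (h2.trans ?_)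
      exact add_le_add_left (measure_mono (thickening_subset_cthickening _ _)) _
    calc (1:ENNReal) ≤ c k (Sset f δ k) + k * ENNReal.ofReal δ := IH
      _ ≤ (c (k+1) (Sset f δ (k+1)) + ENNReal.ofReal δ) + k * ENNReal.ofReal δ :=
        add_le_add_left hstep _
      _ = c (k+1) (Sset f δ (k+1)) + (k+1 : ℕ) * ENNReal.ofReal δ := by
        push_cast
        ring

end Sets


lemma C_to_B [Nonempty M] (f : M → M) (hf : Continuous f) {a : M}
    (hC : (⋂ n : ℕ, f^[n + 1] '' univ) = {a}) (μ : Measure M)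
    (hμ : IsProbabilityMeasure μ) : _root_.InducedChainContinuousAt f μ := by
  intro ε hε
  haveI := hμ
  set r : ℝ := ε/8 with hr_def
  have hr : 0 < r := by positivity
  -- find N ≥ 1 with Kset f N ⊆ ball a r
  obtain ⟨N', hN'⟩ : ∃ i : ℕ, Kset f (i+1) ⊆ ball a r := by
    have hdir : Directed (· ⊇ ·) (fun i : ℕ => Kset f (i+1)) := by
      have hanti : Antitone (fun i : ℕ => Kset f (i+1)) :=
        fun i j hij => Kset_antitone (by omega)
      exact hanti.directed_ge
    refine exists_subset_nhds_of_isCompact hdir (fun i => Kset_compact hf (i+1)) ?_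
    intro x hx
    have hxa : x = a := by
      have : x ∈ (⋂ n : ℕ, f^[n + 1] '' univ) := by
        rw [mem_iInter] at hx ⊢
        exact fun i => hx i
      rw [hC] at this
      exact this
    subst hxa
    exact ball_mem_nhds _ hr
  set N : ℕ := N' + 1 with hN_def
  have hKN : Kset f N ⊆ ball a r := hN'
  -- fattened set inclusion
  obtain ⟨δ₁, hδ₁, hincl⟩ := Sset_subset_cthickening (f := f) hf N r hr
  -- finitely many steps
  obtain ⟨δ₂, hδ₂0, _, hfin⟩ := fin_steps f hf N ε hε
  set δ : ℝ := min (min δ₁ δ₂) (r / N) with hδ_def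
  have hδ0 : 0 < δ := lt_min (lt_min hδ₁ hδ₂0) (by positivity)
  refine ⟨δ, hδ0, fun c hc h0 hch => ?_⟩
  have hSmeas : MeasurableSet (Sset f δ N) := (Sset_closed δ N).measurableSet
  have hKmeas : MeasurableSet (Kset f N) := (Kset_compact hf N).isClosed.measurableSet
  have hT : Sset f δ N ⊆ closedBall a (2*r) := by
    refine (hincl δ hδ0 ((min_le_left _ _).trans (min_le_left _ _))).trans ?_
    intro x hx
    obtain ⟨y, hy, hxy⟩ := (Kset_compact hf N).exists_infEdist_eq_edist (Kset_nonempty N) x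
    rw [mem_cthickening_iff, hxy, edist_dist] at hx
    have hd : dist x y ≤ r := (ENNReal.ofReal_le_ofReal_iff hr.le).1 hx
    have hya : dist y a < r := hKN hy
    rw [mem_closedBall]
    calc dist x a ≤ dist x y + dist y a := dist_triangle _ _ _
      _ ≤ 2*r := by linarith
  have hNδr : (N : ENNReal) * ENNReal.ofReal δ ≤ ENNReal.ofReal r := by
    have h1 : (N:ℝ) * δ ≤ r := by
      have : δ ≤ r / N := min_le_right _ _
      have hNpos : (0:ℝ) < N := by positivity
      calc (N:ℝ) * δ ≤ (N:ℝ) * (r / N) := by nlinarith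
        _ = r := by field_simp
    calc (N : ENNReal) * ENNReal.ofReal δ
        = ENNReal.ofReal ((N:ℝ) * δ) := by
          rw [ENNReal.ofReal_mul (by positivity), ENNReal.ofReal_natCast]
      _ ≤ ENNReal.ofReal r := ENNReal.ofReal_le_ofReal h1
  intro n
  rcases le_or_gt n N with hn | hn
  · exact hfin μ c hμ hc (lt_of_lt_of_le h0 ((min_le_left _ _).trans (min_le_right _ _)))
      (fun k => lt_of_lt_of_le (hch k) ((min_le_left _ _).trans (min_le_right _ _))) n hn
  · -- n > N : both measures concentrate near a
    have hNn : N ≤ n := hn.le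
    haveI := fun i => hc i
    haveI : IsProbabilityMeasure (Measure.map f^[n] μ) :=
      Measure.isProbabilityMeasure_map (hf.measurable.iterate n).aemeasurable
    -- shifted chain
    have hprop := chain_prop hf hδ0 (fun j => c (n - N + j)) (fun j => hc _)
      (fun j => hch (n - N + j)) N
    rw [Nat.sub_add_cancel hNn] at hprop
    have hmass : (1:ENNReal) ≤ c n (Sset f δ N) + ENNReal.ofReal r :=
      hprop.trans (add_le_add_right hNδr _)
    have horb : Measure.map f^[n] μ (Kset f N) = 1 := by
      rw [Measure.map_apply (hf.measurable.iterate n) hKmeas]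
      have : f^[n] ⁻¹' (Kset f N) = univ := by
        refine eq_univ_of_forall fun x => ?_
        have : f^[n] x ∈ Kset f n := ⟨x, mem_univ x, rfl⟩
        exact Kset_antitone hNn this
      rw [this, measure_univ]
    have hPD : PD (c n) (Measure.map f^[n] μ) (6*r) := by
      refine ⟨by linarith, fun X hX => ⟨?_, ?_⟩⟩
      · by_cases hXT : (X ∩ Sset f δ N).Nonempty
        · obtain ⟨x, hxX, hxT⟩ := hXT
          have hdxa : dist x a ≤ 2*r := mem_closedBall.1 (hT hxT)
          have hsub : Kset f N ⊆ Metric.thickening (6*r) X := by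
            intro z hz
            have hza : dist z a < r := hKN hz
            refine mem_thickening_iff.2 ⟨x, hxX, ?_⟩
            calc dist z x ≤ dist z a + dist a x := dist_triangle _ _ _
              _ ≤ r + 2*r := by rw [dist_comm a x]; linarith
              _ < 6*r := by linarith
          have : Measure.map f^[n] μ (Metric.thickening (6*r) X) = 1 :=
            le_antisymm prob_le_one (horb ▸ measure_mono hsub)
          rw [this]
          exact le_add_right prob_le_one
        · have hXc : X ⊆ (Sset f δ N)ᶜ := by
            intro x hx
            by_contra hx'
            exact hXT ⟨x, hx, not_not.1 hx'⟩
          have hcompl : c n ((Sset f δ N)ᶜ) ≤ ENNReal.ofReal r := by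
            rw [measure_compl hSmeas (measure_ne_top _ _), measure_univ]
            exact tsub_le_iff_left.2 hmass
          calc c n X ≤ ENNReal.ofReal r := (measure_mono hXc).trans hcompl
            _ ≤ ENNReal.ofReal (6*r) := ENNReal.ofReal_le_ofReal (by linarith)
            _ ≤ _ := le_add_self
      · by_cases hXK : (X ∩ Kset f N).Nonempty
        · obtain ⟨x, hxX, hxK⟩ := hXK
          have hdxa : dist x a < r := hKN hxK
          have hsub : Sset f δ N ⊆ Metric.thickening (6*r) X := by
            intro y hy
            have hya : dist y a ≤ 2*r := mem_closedBall.1 (hT hy)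
            refine mem_thickening_iff.2 ⟨x, hxX, ?_⟩
            calc dist y x ≤ dist y a + dist a x := dist_triangle _ _ _
              _ < 2*r + r := by rw [dist_comm a x]; linarith
              _ < 6*r := by linarith
          calc Measure.map f^[n] μ X ≤ 1 := prob_le_one
            _ ≤ c n (Sset f δ N) + ENNReal.ofReal r := hmass
            _ ≤ c n (Metric.thickening (6*r) X) + ENNReal.ofReal (6*r) :=
              add_le_add (measure_mono hsub) (ENNReal.ofReal_le_ofReal (by linarith))
        · have hXc : X ⊆ (Kset f N)ᶜ := by
            intro x hx
            by_contra hx'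
            exact hXK ⟨x, hx, not_not.1 hx'⟩
          have : Measure.map f^[n] μ X = 0 := by
            refine le_antisymm ?_ zero_le
            refine le_trans (measure_mono hXc) ?_
            rw [measure_compl hKmeas (measure_ne_top _ _), measure_univ, horb]
            simp
          rw [this]
          exact zero_le
    calc prohorovDist (c n) (Measure.map f^[n] μ) ≤ 6*r := prohorov_le hPD
      _ < ε := by rw [hr_def]; linarith


lemma A_to_C [Nonempty M] (f : M → M) (hf : Continuous f)
    (μ : Measure M) (hμ : IsProbabilityMeasure μ)
    (hcc : _root_.InducedChainContinuousAt f μ) :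
    ∃ a : M, (⋂ n : ℕ, f^[n + 1] '' univ) = {a} := by
  haveI := hμ
  have hfm : Measurable f := hf.measurable
  have hne : (⋂ n : ℕ, f^[n + 1] '' univ).Nonempty := by
    refine IsCompact.nonempty_iInter_of_sequence_nonempty_isCompact_isClosed
      (fun n => f^[n+1] '' univ) (fun i => ?_) (fun i => Set.Nonempty.image _ univ_nonempty)
      (Kset_compact hf 1) (fun i => (Kset_compact hf (i+1)).isClosed)
    exact Kset_antitone (by omega)
  have key : ∀ θ : ℝ, 0 < θ → ∃ m : ℕ, 1 ≤ m ∧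
      ∀ x y : M, dist (f^[m] x) (f^[m] y) < θ := by
    intro θ hθ
    set ε : ℝ := min (θ/2) (1/4) with hε_def
    have hε : 0 < ε := lt_min (by linarith) (by norm_num)
    obtain ⟨δ, hδ0, hccδ⟩ := hcc ε hε
    obtain ⟨m', hm'⟩ := exists_nat_one_div_lt hδ0
    refine ⟨m' + 1, Nat.le_add_left 1 m', ?_⟩
    set m : ℕ := m' + 1 with hm_def
    have hm0 : (0:ℝ) < m := by positivity
    have hmδ : 1/(m:ℝ) < δ := by exact_mod_cast hm'
    haveI hmapP : ∀ n : ℕ, IsProbabilityMeasure (Measure.map f^[n] μ) := fun n =>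
      Measure.isProbabilityMeasure_map (hfm.iterate n).aemeasurable
    -- the interpolation chain shows every Dirac orbit point is ε-close to the orbit of μ
    have key1 : ∀ z : M, prohorovDist (Measure.dirac (f^[m] z)) (Measure.map f^[m] μ) < ε := by
      intro z
      set t : ℕ → ℝ := fun n => min ((n:ℝ)/m) 1 with ht_def
      have ht0 : ∀ n, 0 ≤ t n := fun n => le_min (by positivity) zero_le_one
      have ht1 : ∀ n, t n ≤ 1 := fun n => min_le_right _ _
      have htmono : ∀ n : ℕ, t n ≤ t (n+1) := by
        intro n
        refine min_le_min ?_ le_rfl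
        refine (div_le_div_iff_of_pos_right hm0).2 ?_
        push_cast
        linarith
      have htstep : ∀ n : ℕ, t (n+1) ≤ t n + 1/m := by
        intro n
        have hm1 : (0:ℝ) < 1/m := by positivity
        rcases le_or_gt ((n:ℝ)/m) 1 with h | h
        · have h1 : t n = (n:ℝ)/m := min_eq_left h
          have h2 : t (n+1) ≤ ((n:ℝ)+1)/m := by
            refine (min_le_left _ _).trans ?_
            push_cast
            exact le_rfl
          rw [h1]
          calc t (n+1) ≤ ((n:ℝ)+1)/m := h2
            _ = (n:ℝ)/m + 1/m := by ring
        · have h1 : t n = 1 := min_eq_right h.le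
          rw [h1]
          linarith [ht1 (n+1)]
      set c : ℕ → Measure M := fun n =>
        ENNReal.ofReal (1 - t n) • Measure.map f^[n] μ
          + ENNReal.ofReal (t n) • Measure.dirac (f^[n] z) with hc_def
      have happ : ∀ (ν κ : Measure M) (s u : ENNReal) (X : Set M),
          (s • ν + u • κ) X = s * ν X + u * κ X := by
        intro ν κ s u X
        simp [Measure.smul_apply, smul_eq_mul]
      have hcprob : ∀ n, IsProbabilityMeasure (c n) := by
        intro n
        constructor
        rw [hc_def]
        simp only []
        rw [happ, measure_univ, measure_univ, mul_one, mul_one,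
          ← ENNReal.ofReal_add (by linarith [ht1 n]) (ht0 n)]
        norm_num
      have hc0 : c 0 = μ := by
        have ht00 : t 0 = 0 := by simp [ht_def]
        simp [hc_def, ht00]
      have hcm : c m = Measure.dirac (f^[m] z) := by
        have htm : t m = 1 := by
          rw [ht_def]
          simp only []
          rw [div_self (ne_of_gt hm0), min_self]
        simp [hc_def, htm]
      have hchain : ∀ n, prohorovDist (c (n+1)) (Measure.map f (c n)) < δ := by
        intro n
        have hmap : Measure.map f (c n) =
            ENNReal.ofReal (1 - t n) • Measure.map f^[n+1] μ
              + ENNReal.ofReal (t n) • Measure.dirac (f^[n+1] z) := by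
          rw [hc_def]
          simp only []
          rw [Measure.map_add _ _ hfm, Measure.map_smul, Measure.map_smul,
            Measure.map_map hfm (hfm.iterate n), ← Function.iterate_succ' f n,
            Measure.map_dirac' hfm, ← Function.iterate_succ_apply' f n]
        have hPD : PD (c (n+1)) (Measure.map f (c n)) (1/m) := by
          refine PD_of_TV (by positivity) (fun X hX => ?_)
          rw [hmap, hc_def]
          simp only []
          rw [happ, happ]
          set A := Measure.map f^[n+1] μ X with hA_def
          set B := Measure.dirac (f^[n+1] z) X with hB_def
          have hA : A ≤ 1 := prob_le_one
          have hB : B ≤ 1 := prob_le_one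
          constructor
          · have e1 : ENNReal.ofReal (1 - t (n+1)) ≤ ENNReal.ofReal (1 - t n) :=
              ENNReal.ofReal_le_ofReal (by linarith [htmono n])
            have e2 : ENNReal.ofReal (t (n+1)) ≤ ENNReal.ofReal (t n) + ENNReal.ofReal (1/m) := by
              rw [← ENNReal.ofReal_add (ht0 n) (by positivity)]
              exact ENNReal.ofReal_le_ofReal (htstep n)
            calc ENNReal.ofReal (1 - t (n+1)) * A + ENNReal.ofReal (t (n+1)) * B
                ≤ ENNReal.ofReal (1 - t n) * A
                    + (ENNReal.ofReal (t n) + ENNReal.ofReal (1/m)) * B :=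
                  add_le_add (mul_le_mul_left e1 A) (mul_le_mul_left e2 B)
              _ = ENNReal.ofReal (1 - t n) * A + ENNReal.ofReal (t n) * B
                    + ENNReal.ofReal (1/m) * B := by ring
              _ ≤ ENNReal.ofReal (1 - t n) * A + ENNReal.ofReal (t n) * B
                    + ENNReal.ofReal (1/m) * 1 :=
                  add_le_add_right (mul_le_mul_right hB _) _
              _ = ENNReal.ofReal (1 - t n) * A + ENNReal.ofReal (t n) * B
                    + ENNReal.ofReal (1/m) := by rw [mul_one]
          · have e1 : ENNReal.ofReal (1 - t n)
                ≤ ENNReal.ofReal (1 - t (n+1)) + ENNReal.ofReal (1/m) := by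
              rw [← ENNReal.ofReal_add (by linarith [ht1 (n+1)]) (by positivity)]
              exact ENNReal.ofReal_le_ofReal (by linarith [htstep n])
            have e2 : ENNReal.ofReal (t n) ≤ ENNReal.ofReal (t (n+1)) :=
              ENNReal.ofReal_le_ofReal (htmono n)
            calc ENNReal.ofReal (1 - t n) * A + ENNReal.ofReal (t n) * B
                ≤ (ENNReal.ofReal (1 - t (n+1)) + ENNReal.ofReal (1/m)) * A
                    + ENNReal.ofReal (t (n+1)) * B :=
                  add_le_add (mul_le_mul_left e1 A) (mul_le_mul_left e2 B)
              _ = ENNReal.ofReal (1 - t (n+1)) * A + ENNReal.ofReal (t (n+1)) * B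
                    + ENNReal.ofReal (1/m) * A := by ring
              _ ≤ ENNReal.ofReal (1 - t (n+1)) * A + ENNReal.ofReal (t (n+1)) * B
                    + ENNReal.ofReal (1/m) * 1 :=
                  add_le_add_right (mul_le_mul_right hA _) _
              _ = ENNReal.ofReal (1 - t (n+1)) * A + ENNReal.ofReal (t (n+1)) * B
                    + ENNReal.ofReal (1/m) := by rw [mul_one]
        exact lt_of_le_of_lt (prohorov_le hPD) hmδ
      have h0 : prohorovDist (c 0) μ < δ := by
        rw [hc0]
        exact prohorov_self_lt μ hδ0
      have hfinal := hccδ c hcprob h0 hchain m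
      rwa [hcm] at hfinal
    intro x y
    haveI : IsProbabilityMeasure (Measure.map f^[m] μ) := hmapP m
    have hxy : PD (Measure.dirac (f^[m] x)) (Measure.dirac (f^[m] y)) (ε + ε) :=
      (PD_of_lt (key1 x)).trans ((PD_of_lt (key1 y)).symm)
    have hεs : ε ≤ 1/4 := min_le_right _ _
    have hd : dist (f^[m] y) (f^[m] x) < ε + ε :=
      dist_lt_of_PD_dirac hxy (by linarith)
    have hεθ : ε ≤ θ/2 := min_le_left _ _
    calc dist (f^[m] x) (f^[m] y) = dist (f^[m] y) (f^[m] x) := dist_comm _ _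
      _ < ε + ε := hd
      _ ≤ θ := by linarith
  obtain ⟨b, hb⟩ := hne
  refine ⟨b, ?_⟩
  rw [eq_singleton_iff_unique_mem]
  refine ⟨hb, fun q hq => ?_⟩
  by_contra hqb
  have hpos : 0 < dist q b := dist_pos.2 hqb
  obtain ⟨m, hm1, hcontr⟩ := key (dist q b) hpos
  have hq' : q ∈ f^[m] '' univ := by
    have h := mem_iInter.1 hq (m - 1)
    rwa [Nat.sub_add_cancel hm1] at h
  have hb' : b ∈ f^[m] '' univ := by
    have h := mem_iInter.1 hb (m - 1)
    rwa [Nat.sub_add_cancel hm1] at h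
  obtain ⟨x, -, hx⟩ := hq'
  obtain ⟨y, -, hy⟩ := hb'
  have h := hcontr x y
  rw [hx, hy] at h
  exact lt_irrefl _ h

end ProhorovAux


/-- Theorem: (i) `f̃` chain continuous at some point ↔ (ii) chain continuous at every point
↔ (iii) `⋂_{n ≥ 1} f^n(M)` is a singleton. -/
theorem induced_chainContinuous_iff {M : Type*} [MetricSpace M] [CompactSpace M] [Nonempty M]
    [MeasurableSpace M] [BorelSpace M] (f : M → M) (hf : Continuous f) :
    ((∃ μ : Measure M, IsProbabilityMeasure μ ∧ InducedChainContinuousAt f μ) ↔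
      (∀ μ : Measure M, IsProbabilityMeasure μ → InducedChainContinuousAt f μ)) ∧
    ((∀ μ : Measure M, IsProbabilityMeasure μ → InducedChainContinuousAt f μ) ↔
      (∃ a : M, (⋂ n : ℕ, f^[n + 1] '' Set.univ) = {a})) := by
  have hBA : (∀ μ : Measure M, IsProbabilityMeasure μ → InducedChainContinuousAt f μ) →
      (∃ μ : Measure M, IsProbabilityMeasure μ ∧ InducedChainContinuousAt f μ) := fun hB =>
    ⟨Measure.dirac (Classical.arbitrary M), inferInstance, hB _ inferInstance⟩
  have hAC : (∃ μ : Measure M, IsProbabilityMeasure μ ∧ InducedChainContinuousAt f μ) →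
      (∃ a : M, (⋂ n : ℕ, f^[n + 1] '' Set.univ) = {a}) := by
    rintro ⟨μ, hμ, hccμ⟩
    exact ProhorovAux.A_to_C f hf μ hμ hccμ
  have hCB : (∃ a : M, (⋂ n : ℕ, f^[n + 1] '' Set.univ) = {a}) →
      ∀ μ : Measure M, IsProbabilityMeasure μ → InducedChainContinuousAt f μ := by
    rintro ⟨a, ha⟩ μ hμ
    exact ProhorovAux.C_to_B f hf ha μ hμ
  exact ⟨⟨fun hA => hCB (hAC hA), hBA⟩, ⟨fun hB => hAC (hBA hB), hCB⟩⟩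
end

section
/- If M is a compact metric space with at least two points and h is a homeomorphism of M, then the induced map h̃ on ℳ(M) is chain continuous at no point. -/
open MeasureTheory Metric Set ENNReal

section Aux

variable {M : Type*} [MetricSpace M] [MeasurableSpace M]

lemma prohorov_bddBelow (μ ν : Measure M) :
    BddBelow {δ : ℝ | 0 < δ ∧ ∀ X : Set M, MeasurableSet X →
      μ X ≤ ν (Metric.thickening δ X) + ENNReal.ofReal δ ∧
      ν X ≤ μ (Metric.thickening δ X) + ENNReal.ofReal δ} :=
  ⟨0, fun _ hx => le_of_lt hx.1⟩

lemma prohorov_one_mem (μ ν : Measure M) [IsProbabilityMeasure μ] [IsProbabilityMeasure ν] :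
    (1:ℝ) ∈ {δ : ℝ | 0 < δ ∧ ∀ X : Set M, MeasurableSet X →
      μ X ≤ ν (Metric.thickening δ X) + ENNReal.ofReal δ ∧
      ν X ≤ μ (Metric.thickening δ X) + ENNReal.ofReal δ} := by
  refine ⟨one_pos, fun X _ => ⟨?_, ?_⟩⟩ <;>
  · calc _ ≤ (1 : ℝ≥0∞) := prob_le_one
      _ = ENNReal.ofReal 1 := by simp
      _ ≤ _ := le_add_self

lemma prohorov_le_of_forall_mem (μ ν : Measure M) {r : ℝ} (hr : 0 ≤ r)
    (hmem : ∀ x, r < x → x ∈ {δ : ℝ | 0 < δ ∧ ∀ X : Set M, MeasurableSet X →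
      μ X ≤ ν (Metric.thickening δ X) + ENNReal.ofReal δ ∧
      ν X ≤ μ (Metric.thickening δ X) + ENNReal.ofReal δ}) :
    prohorovDist μ ν ≤ r := by
  refine le_of_forall_pos_le_add fun ε hε => ?_
  exact csInf_le (prohorov_bddBelow μ ν) (hmem _ (by linarith))

lemma prohorov_self_le (μ : Measure M) : prohorovDist μ μ ≤ 0 := by
  refine prohorov_le_of_forall_mem μ μ le_rfl fun x hx => ⟨hx, fun X _ => ?_⟩
  constructor <;>
  exact le_add_right (measure_mono (Metric.self_subset_thickening hx X))

lemma mix_apply_le (α β : Measure M)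
    [IsProbabilityMeasure α] [IsProbabilityMeasure β] {s t : ℝ}
    (hs0 : 0 ≤ s) (hs1 : s ≤ 1) (ht0 : 0 ≤ t) (ht1 : t ≤ 1) (X : Set M) :
    (ENNReal.ofReal (1-s) • α + ENNReal.ofReal s • β) X
      ≤ (ENNReal.ofReal (1-t) • α + ENNReal.ofReal t • β) X + ENNReal.ofReal |s - t| := by
  have hA : α X ≤ 1 := prob_le_one
  have hB : β X ≤ 1 := prob_le_one
  simp only [Measure.coe_add, Pi.add_apply, Measure.smul_apply, smul_eq_mul]
  rcases le_total s t with hst | hst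
  · rw [abs_of_nonpos (by linarith), neg_sub]
    have e1 : ENNReal.ofReal (1-s) = ENNReal.ofReal (1-t) + ENNReal.ofReal (t-s) := by
      rw [← ENNReal.ofReal_add (by linarith) (by linarith)]; ring_nf
    rw [e1, add_mul]
    have h2 : ENNReal.ofReal (t-s) * α X ≤ ENNReal.ofReal (t - s) := by
      calc ENNReal.ofReal (t-s) * α X ≤ ENNReal.ofReal (t-s) * 1 := by gcongr
        _ = _ := mul_one _
    have h3 : ENNReal.ofReal s * β X ≤ ENNReal.ofReal t * β X := by
      gcongr
    calc ENNReal.ofReal (1-t) * α X + ENNReal.ofReal (t-s) * α X + ENNReal.ofReal s * β X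
        = ENNReal.ofReal (1-t) * α X + (ENNReal.ofReal (t-s) * α X + ENNReal.ofReal s * β X) := by
          ring
      _ ≤ ENNReal.ofReal (1-t) * α X + (ENNReal.ofReal (t-s) + ENNReal.ofReal t * β X) :=
          add_le_add_right (add_le_add h2 h3) _
      _ = ENNReal.ofReal (1-t) * α X + ENNReal.ofReal t * β X + ENNReal.ofReal (t-s) := by ring
  · rw [abs_of_nonneg (by linarith)]
    have e1 : ENNReal.ofReal s = ENNReal.ofReal t + ENNReal.ofReal (s-t) := by
      rw [← ENNReal.ofReal_add (by linarith) (by linarith)]; ring_nf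
    rw [e1, add_mul]
    have h2 : ENNReal.ofReal (s-t) * β X ≤ ENNReal.ofReal (s - t) := by
      calc ENNReal.ofReal (s-t) * β X ≤ ENNReal.ofReal (s-t) * 1 := by gcongr
        _ = _ := mul_one _
    have h3 : ENNReal.ofReal (1-s) * α X ≤ ENNReal.ofReal (1-t) * α X := by
      gcongr <;> linarith
    calc ENNReal.ofReal (1-s) * α X + (ENNReal.ofReal t * β X + ENNReal.ofReal (s-t) * β X)
        = ENNReal.ofReal t * β X + (ENNReal.ofReal (1-s) * α X + ENNReal.ofReal (s-t) * β X) := by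
          ring
      _ ≤ ENNReal.ofReal t * β X + (ENNReal.ofReal (1-t) * α X + ENNReal.ofReal (s-t)) :=
          add_le_add_right (add_le_add h3 h2) _
      _ = ENNReal.ofReal (1-t) * α X + ENNReal.ofReal t * β X + ENNReal.ofReal (s-t) := by ring

lemma prohorov_mix_le (α β : Measure M)
    [IsProbabilityMeasure α] [IsProbabilityMeasure β] {s t : ℝ}
    (hs0 : 0 ≤ s) (hs1 : s ≤ 1) (ht0 : 0 ≤ t) (ht1 : t ≤ 1) :
    prohorovDist (ENNReal.ofReal (1-s) • α + ENNReal.ofReal s • β)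
      (ENNReal.ofReal (1-t) • α + ENNReal.ofReal t • β) ≤ |s - t| := by
  refine prohorov_le_of_forall_mem _ _ (abs_nonneg _) fun r hr => ?_
  have hr0 : 0 < r := lt_of_le_of_lt (abs_nonneg _) hr
  refine ⟨hr0, fun X _ => ⟨?_, ?_⟩⟩
  · calc _ ≤ (ENNReal.ofReal (1-t) • α + ENNReal.ofReal t • β) X + ENNReal.ofReal |s - t| :=
        mix_apply_le α β hs0 hs1 ht0 ht1 X
      _ ≤ _ := by
        gcongr <;> first
          | exact Metric.self_subset_thickening hr0 X
          | exact hr.le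
  · calc _ ≤ (ENNReal.ofReal (1-s) • α + ENNReal.ofReal s • β) X + ENNReal.ofReal |t - s| :=
        mix_apply_le α β ht0 ht1 hs0 hs1 X
      _ ≤ _ := by
        gcongr <;> first
          | exact Metric.self_subset_thickening hr0 X
          | (rw [abs_sub_comm]; exact hr.le)

lemma prohorov_sep [OpensMeasurableSpace M] (m : Measure M) [IsProbabilityMeasure m]
    {a b : M} (hab : a ≠ b)
    (h1 : prohorovDist (Measure.dirac a) m < min (dist a b) 1 / 2)
    (h2 : prohorovDist (Measure.dirac b) m < min (dist a b) 1 / 2) : False := by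
  set d := dist a b with hd
  have hd0 : 0 < d := dist_pos.mpr hab
  set ε : ℝ := min d 1 / 2 with hε
  have hε0 : 0 < ε := by positivity
  have hεd : ε ≤ d / 2 := by
    have := min_le_left d 1; simp only [hε]; linarith
  have hε1 : ε ≤ 1 / 2 := by
    have := min_le_right d 1; simp only [hε]; linarith
  -- extract admissible radii
  have key : ∀ x : M, prohorovDist (Measure.dirac x) m < ε →
      ∃ r : ℝ, 0 < r ∧ r < ε ∧ (1 : ℝ≥0∞) ≤ m (Metric.ball x (d/2)) + ENNReal.ofReal r := by
    intro x hx
    obtain ⟨r, hrS, hrε⟩ := exists_lt_of_csInf_lt ⟨1, prohorov_one_mem _ _⟩ hx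
    obtain ⟨hr0, hrall⟩ := hrS
    refine ⟨r, hr0, hrε, ?_⟩
    have := (hrall {x} (measurableSet_singleton x)).1
    rw [Measure.dirac_apply_of_mem (mem_singleton x)] at this
    calc (1:ℝ≥0∞) ≤ m (Metric.thickening r {x}) + ENNReal.ofReal r := this
      _ ≤ m (Metric.ball x (d/2)) + ENNReal.ofReal r := by
        gcongr
        rw [Metric.thickening_singleton]
        exact Metric.ball_subset_ball (by linarith)
  obtain ⟨ra, hra0, hraε, hra⟩ := key a h1
  obtain ⟨rb, hrb0, hrbε, hrb⟩ := key b h2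
  have hdisj : Disjoint (Metric.ball a (d/2)) (Metric.ball b (d/2)) := by
    rw [Set.disjoint_left]
    intro x hxa hxb
    rw [Metric.mem_ball] at hxa hxb
    have : dist a b ≤ dist x a + dist x b := dist_triangle_left a b x
    linarith [hxa, hxb]
  have hsum : m (Metric.ball a (d/2)) + m (Metric.ball b (d/2)) ≤ 1 := by
    rw [← measure_union hdisj measurableSet_ball]
    exact prob_le_one
  have hlt : ENNReal.ofReal ra + ENNReal.ofReal rb < 1 := by
    rw [← ENNReal.ofReal_add hra0.le hrb0.le]
    rw [ENNReal.ofReal_lt_one]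
    linarith
  have : (2:ℝ≥0∞) ≤ (1:ℝ≥0∞) + (ENNReal.ofReal ra + ENNReal.ofReal rb) := by
    calc (2:ℝ≥0∞) = 1 + 1 := by norm_num
      _ ≤ (m (Metric.ball a (d/2)) + ENNReal.ofReal ra) +
            (m (Metric.ball b (d/2)) + ENNReal.ofReal rb) := add_le_add hra hrb
      _ = (m (Metric.ball a (d/2)) + m (Metric.ball b (d/2))) +
            (ENNReal.ofReal ra + ENNReal.ofReal rb) := by ring
      _ ≤ _ := by gcongr
  have : (2:ℝ≥0∞) < 2 := by
    calc (2:ℝ≥0∞) ≤ 1 + (ENNReal.ofReal ra + ENNReal.ofReal rb) := this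
      _ < 1 + 1 := by
          exact ENNReal.add_lt_add_left one_ne_top hlt
      _ = 2 := by norm_num
  exact lt_irrefl _ this

end Aux

/-- If `M` has at least two points and `h` is a homeomorphism of `M`, then `h̃` is chain
continuous at no point. -/
theorem induced_no_chainContinuity {M : Type*} [MetricSpace M] [CompactSpace M]
    [MeasurableSpace M] [BorelSpace M]
    (hM : ∃ x y : M, x ≠ y) (h : M ≃ₜ M) :
    ∀ μ : Measure M, IsProbabilityMeasure μ → ¬ InducedChainContinuousAt (⇑h) μ := by
  obtain ⟨a, b, hab⟩ := hM
  intro μ hμ hcc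
  have hmeas : Measurable (⇑h) := h.continuous.measurable
  have hiter : ∀ n : ℕ, Measurable ((⇑h)^[n]) := fun n => hmeas.iterate n
  have hprob : ∀ n : ℕ, IsProbabilityMeasure (Measure.map ((⇑h)^[n]) μ) := fun n =>
    Measure.isProbabilityMeasure_map (hiter n).aemeasurable
  set ε : ℝ := min (dist a b) 1 / 2 with hεdef
  have hd0 : 0 < dist a b := dist_pos.mpr hab
  have hε0 : 0 < ε := by positivity
  obtain ⟨δ, hδ0, hδ⟩ := hcc ε hε0
  set δ' : ℝ := δ / 2 with hδ'def
  have hδ'0 : 0 < δ' := by positivity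
  set N : ℕ := ⌈1 / δ'⌉₊ with hN
  have hNδ' : 1 ≤ (N : ℝ) * δ' := by
    rw [hN]
    have := Nat.le_ceil (1 / δ')
    calc (1:ℝ) = (1/δ') * δ' := by field_simp
      _ ≤ _ := by gcongr
  -- choose the far point q
  have hq : ∃ q : M, ¬ prohorovDist (Measure.dirac q) (Measure.map ((⇑h)^[N]) μ) < ε := by
    haveI := hprob N
    by_cases hqa : prohorovDist (Measure.dirac a) (Measure.map ((⇑h)^[N]) μ) < ε
    · exact ⟨b, fun hqb => prohorov_sep _ hab hqa hqb⟩
    · exact ⟨a, hqa⟩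
  obtain ⟨q, hqfar⟩ := hq
  set p : M := (⇑h.symm)^[N] q with hp
  have hpq : (⇑h)^[N] p = q := Function.LeftInverse.iterate h.apply_symm_apply N q
  -- the parameters
  set s : ℕ → ℝ := fun n => min ((n : ℝ) * δ') 1 with hs
  have hs0 : ∀ n, 0 ≤ s n := fun n => le_min (by positivity) zero_le_one
  have hs1 : ∀ n, s n ≤ 1 := fun n => min_le_right _ _
  have hsstep : ∀ n, |s (n+1) - s n| ≤ δ' := by
    intro n
    rw [abs_sub_le_iff]
    constructor
    · have : s (n+1) ≤ s n + δ' := by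
        calc s (n+1) = min ((n:ℝ) * δ' + δ') 1 := by rw [hs]; push_cast; ring_nf
          _ ≤ min ((n:ℝ) * δ' + δ') (1 + δ') := min_le_min le_rfl (by linarith)
          _ = min ((n:ℝ) * δ') 1 + δ' := by rw [min_add_add_right]
      linarith
    · have : s n ≤ s (n+1) := by
        apply min_le_min _ le_rfl
        have : (n:ℝ) ≤ (n:ℝ) + 1 := by linarith
        push_cast
        nlinarith [hδ'0]
      linarith
  -- the pseudo-orbit
  set c : ℕ → Measure M := fun n =>
    ENNReal.ofReal (1 - s n) • Measure.map ((⇑h)^[n]) μ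
      + ENNReal.ofReal (s n) • Measure.dirac ((⇑h)^[n] p) with hc
  have hcprob : ∀ i, IsProbabilityMeasure (c i) := by
    intro i
    constructor
    rw [hc]
    simp only [Measure.coe_add, Pi.add_apply, Measure.smul_apply, smul_eq_mul]
    haveI := hprob i
    rw [measure_univ, measure_univ, mul_one, mul_one,
      ← ENNReal.ofReal_add (by linarith [hs1 i]) (hs0 i)]
    norm_num
  have hc0 : c 0 = μ := by
    rw [hc]
    simp only
    have : s 0 = 0 := by rw [hs]; simp
    rw [this]
    simp [Measure.map_id]
  have hstart : prohorovDist (c 0) μ < δ := by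
    rw [hc0]
    exact lt_of_le_of_lt (prohorov_self_le μ) hδ0
  have hstep : ∀ n : ℕ, prohorovDist (c (n + 1)) (Measure.map (⇑h) (c n)) < δ := by
    intro n
    have hmap : Measure.map (⇑h) (c n) =
        ENNReal.ofReal (1 - s n) • Measure.map ((⇑h)^[n+1]) μ
          + ENNReal.ofReal (s n) • Measure.dirac ((⇑h)^[n+1] p) := by
      rw [hc]
      simp only
      rw [Measure.map_add _ _ hmeas, Measure.map_smul, Measure.map_smul,
        Measure.map_map hmeas (hiter n), Measure.map_dirac' hmeas,
        ← Function.iterate_succ_apply' (⇑h) n p, ← Function.iterate_succ' (⇑h) n]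
    rw [hmap]
    haveI := hprob (n+1)
    calc prohorovDist _ _ ≤ |s (n+1) - s n| :=
        prohorov_mix_le _ _ (hs0 _) (hs1 _) (hs0 _) (hs1 _)
      _ ≤ δ' := hsstep n
      _ < δ := by rw [hδ'def]; linarith
  have hfinal := hδ c hcprob hstart hstep N
  have hsN : s N = 1 := by
    rw [hs]
    exact min_eq_right hNδ'
  have hcN : c N = Measure.dirac q := by
    rw [hc]
    simp only
    rw [hsN, hpq]
    norm_num
  rw [hcN] at hfinal
  exact hqfar hfinal
end

section
/- If h is a homeomorphism of a compact metric space M which is not topologically transitive, then the induced map h̃ on ℳ(M) does not have the weak shadowing property. -/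
open MeasureTheory Metric Set
open scoped ENNReal NNReal

namespace ProhorovAux

variable {M : Type*} [MetricSpace M] [MeasurableSpace M]

/-- The defining set of the Prohorov distance. -/
def PSet (μ ν : Measure M) : Set ℝ :=
  {δ : ℝ | 0 < δ ∧ ∀ X : Set M, MeasurableSet X →
    μ X ≤ ν (Metric.thickening δ X) + ENNReal.ofReal δ ∧
    ν X ≤ μ (Metric.thickening δ X) + ENNReal.ofReal δ}

lemma prohorovDist_eq (μ ν : Measure M) : prohorovDist μ ν = sInf (PSet μ ν) := rfl

lemma bddBelow_PSet (μ ν : Measure M) : BddBelow (PSet μ ν) :=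
  ⟨0, fun _ hx => hx.1.le⟩

lemma mem_PSet_of_ge_one {μ ν : Measure M} [IsProbabilityMeasure μ] [IsProbabilityMeasure ν]
    {c : ℝ} (hc : 1 ≤ c) : c ∈ PSet μ ν := by
  have hofc : (1 : ℝ≥0∞) ≤ ENNReal.ofReal c := by
    rw [show (1:ℝ≥0∞) = ENNReal.ofReal 1 by simp]
    exact ENNReal.ofReal_le_ofReal hc
  refine ⟨lt_of_lt_of_le one_pos hc, fun X _ => ⟨?_, ?_⟩⟩ <;>
    exact le_trans (le_trans prob_le_one hofc) le_add_self

lemma exists_witness {μ ν : Measure M} [IsProbabilityMeasure μ] [IsProbabilityMeasure ν]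
    {ε : ℝ} (h : prohorovDist μ ν < ε) :
    ∃ d : ℝ, 0 < d ∧ d < ε ∧ ∀ X : Set M, MeasurableSet X →
      μ X ≤ ν (Metric.thickening d X) + ENNReal.ofReal d ∧
      ν X ≤ μ (Metric.thickening d X) + ENNReal.ofReal d := by
  rw [prohorovDist_eq] at h
  have hne : (PSet μ ν).Nonempty := ⟨1, mem_PSet_of_ge_one le_rfl⟩
  obtain ⟨d, hd, hdε⟩ := (csInf_lt_iff (bddBelow_PSet μ ν) hne).1 h
  exact ⟨d, hd.1, hdε, hd.2⟩

/-- Interpolation bound for the Prohorov distance between convex combinations. -/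
lemma prohorovDist_interp_le (ρ σ : Measure M) [IsProbabilityMeasure ρ] [IsProbabilityMeasure σ]
    {a b : ℝ} (h0 : 0 ≤ a) (hab : a ≤ b) (hb : b ≤ 1) :
    prohorovDist ((1 - ENNReal.ofReal a) • ρ + ENNReal.ofReal a • σ)
      ((1 - ENNReal.ofReal b) • ρ + ENNReal.ofReal b • σ) ≤ b - a := by
  set A := ENNReal.ofReal a with hA
  set B := ENNReal.ofReal b with hB
  have hAB : A ≤ B := ENNReal.ofReal_le_ofReal hab
  have hB1 : B ≤ 1 := by rw [hB]; exact ENNReal.ofReal_le_one.2 hb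
  have hkey : ∀ c : ℝ, b - a < c → c ∈ PSet ((1 - A) • ρ + A • σ) ((1 - B) • ρ + B • σ) := by
    intro c hc
    have hcpos : 0 < c := lt_of_le_of_lt (by linarith) hc
    have hBA : B - A ≤ ENNReal.ofReal c := by
      rw [hA, hB, ← ENNReal.ofReal_sub _ h0]
      exact ENNReal.ofReal_le_ofReal hc.le
    refine ⟨hcpos, fun X hX => ?_⟩
    have hXsub : ∀ (κ : Measure M), κ X ≤ κ (Metric.thickening c X) :=
      fun κ => measure_mono (self_subset_thickening hcpos X)
    constructor
    · have h1 : ((1 - A) • ρ + A • σ) X ≤ ((1 - B) • ρ + B • σ) X + ENNReal.ofReal c := by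
        simp only [Measure.coe_add, Pi.add_apply, Measure.smul_apply, smul_eq_mul]
        have e1 : (1 - A) = (1 - B) + (B - A) := (tsub_add_tsub_cancel hB1 hAB).symm
        calc (1 - A) * ρ X + A * σ X
            = (1 - B) * ρ X + (B - A) * ρ X + A * σ X := by rw [e1, add_mul]
          _ ≤ (1 - B) * ρ X + (B - A) * 1 + B * σ X :=
              add_le_add (add_le_add le_rfl (mul_le_mul' le_rfl prob_le_one))
                (mul_le_mul' hAB le_rfl)
          _ = ((1 - B) * ρ X + B * σ X) + (B - A) := by rw [mul_one]; ring
          _ ≤ ((1 - B) * ρ X + B * σ X) + ENNReal.ofReal c := add_le_add le_rfl hBA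
      exact h1.trans (add_le_add (hXsub _) le_rfl)
    · have h1 : ((1 - B) • ρ + B • σ) X ≤ ((1 - A) • ρ + A • σ) X + ENNReal.ofReal c := by
        simp only [Measure.coe_add, Pi.add_apply, Measure.smul_apply, smul_eq_mul]
        have e2 : B = A + (B - A) := (add_tsub_cancel_of_le hAB).symm
        calc (1 - B) * ρ X + B * σ X
            = (1 - B) * ρ X + (A * σ X + (B - A) * σ X) := by rw [← add_mul, ← e2]
          _ ≤ (1 - A) * ρ X + (A * σ X + (B - A) * 1) :=
              add_le_add (mul_le_mul' (tsub_le_tsub_left hAB 1) le_rfl)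
                (add_le_add le_rfl (mul_le_mul' le_rfl prob_le_one))
          _ = ((1 - A) * ρ X + A * σ X) + (B - A) := by rw [mul_one, add_assoc]
          _ ≤ ((1 - A) * ρ X + A * σ X) + ENNReal.ofReal c := add_le_add le_rfl hBA
      exact h1.trans (add_le_add (hXsub _) le_rfl)
  rw [prohorovDist_eq]
  refine le_of_forall_pos_le_add fun e he => ?_
  exact csInf_le (bddBelow_PSet _ _) (hkey (b - a + e) (by linarith))

end ProhorovAux

namespace ProhorovAux

section Zpow

variable {M : Type*} [TopologicalSpace M] [MeasurableSpace M] [BorelSpace M]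

lemma zpow_succ_apply (e : Equiv.Perm M) (m : ℤ) (x : M) :
    (e ^ (m + 1)) x = e ((e ^ m) x) := by
  rw [add_comm, zpow_add, zpow_one, Equiv.Perm.mul_apply]

lemma zpow_pred_apply (e : Equiv.Perm M) (m : ℤ) (x : M) :
    (e ^ (m - 1)) x = e.symm ((e ^ m) x) := by
  rw [sub_eq_neg_add, zpow_add, zpow_neg_one, Equiv.Perm.mul_apply, Equiv.Perm.inv_def]

lemma continuous_hzpow (h : M ≃ₜ M) : ∀ m : ℤ, Continuous ⇑(h.toEquiv ^ m) := by
  intro m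
  induction m using Int.induction_on with
  | zero => simpa using continuous_id
  | succ n ih =>
      have : ⇑(h.toEquiv ^ ((n : ℤ) + 1)) = ⇑h ∘ ⇑(h.toEquiv ^ (n : ℤ)) :=
        funext fun x => zpow_succ_apply _ _ _
      rw [this]; exact h.continuous.comp ih
  | pred n ih =>
      have : ⇑(h.toEquiv ^ (-(n : ℤ) - 1)) = ⇑h.symm ∘ ⇑(h.toEquiv ^ (-(n : ℤ))) :=
        funext fun x => zpow_pred_apply _ _ _
      rw [this]; exact h.symm.continuous.comp ih

lemma measurable_hzpow (h : M ≃ₜ M) (m : ℤ) : Measurable ⇑(h.toEquiv ^ m) :=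
  (continuous_hzpow h m).measurable

lemma map_h_map_zpow (h : M ≃ₜ M) (ζ : Measure M) (t : ℤ) :
    Measure.map ⇑h (Measure.map ⇑(h.toEquiv ^ t) ζ) = Measure.map ⇑(h.toEquiv ^ (t + 1)) ζ := by
  rw [Measure.map_map h.continuous.measurable (measurable_hzpow h t)]
  congr 1
  funext x
  exact (zpow_succ_apply _ _ _).symm

end Zpow

end ProhorovAux

namespace ProhorovAux

section Chain

variable {M : Type*} [MetricSpace M] [MeasurableSpace M] [BorelSpace M]

lemma interp_isProbability {A : ℝ≥0∞} (hA : A ≤ 1) (μ ν : Measure M)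
    [IsProbabilityMeasure μ] [IsProbabilityMeasure ν] :
    IsProbabilityMeasure ((1 - A) • μ + A • ν) := by
  constructor
  simp only [Measure.coe_add, Pi.add_apply, Measure.smul_apply, smul_eq_mul, measure_univ,
    mul_one]
  exact tsub_add_cancel_of_le hA

/-- Given the weak–shadowing property at scale `ε` with constant `δ`, any two probability
measures are simultaneously `ε`-approximated by points of one single orbit. -/
lemma exists_shadow_pair (h : M ≃ₜ M) {ε δ : ℝ} (hδ : 0 < δ)
    (hWS : ∀ x : ℤ → Measure M, (∀ n : ℤ, IsProbabilityMeasure (x n)) →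
        (∀ n : ℤ, prohorovDist (Measure.map (⇑h) (x n)) (x (n + 1)) ≤ δ) →
        ∃ η : Measure M, IsProbabilityMeasure η ∧
          ∀ n : ℤ, ∃ m : ℤ, prohorovDist (x n) (Measure.map (⇑(h.toEquiv ^ m)) η) < ε)
    (ζ ξ : Measure M) [IsProbabilityMeasure ζ] [IsProbabilityMeasure ξ] :
    ∃ (η : Measure M), IsProbabilityMeasure η ∧ ∃ m₀ m₁ : ℤ,
      prohorovDist ζ (Measure.map (⇑(h.toEquiv ^ m₀)) η) < ε ∧
      prohorovDist ξ (Measure.map (⇑(h.toEquiv ^ m₁)) η) < ε := by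
  classical
  set n : ℕ := max 1 ⌈1 / δ⌉₊ with hn
  have hn1 : 1 ≤ n := le_max_left _ _
  have hnR : (0 : ℝ) < (n : ℝ) := by exact_mod_cast Nat.lt_of_lt_of_le Nat.zero_lt_one hn1
  have hinv : (1 : ℝ) / (n : ℝ) ≤ δ := by
    have h1 : (1 : ℝ) / δ ≤ (n : ℝ) := by
      calc (1 : ℝ) / δ ≤ (⌈1 / δ⌉₊ : ℝ) := Nat.le_ceil _
        _ ≤ (n : ℝ) := by exact_mod_cast le_max_right 1 ⌈1 / δ⌉₊
    rw [div_le_iff₀ hnR]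
    calc (1 : ℝ) = δ * (1 / δ) := by field_simp
      _ ≤ δ * (n : ℝ) := by nlinarith
  set w : ℤ → ℝ := fun t => min 1 (max 0 ((t : ℝ) / (n : ℝ))) with hw
  have hw_nonneg : ∀ t, 0 ≤ w t := fun t => le_min zero_le_one (le_max_left _ _)
  have hw_le_one : ∀ t, w t ≤ 1 := fun t => min_le_left _ _
  have hw0 : w 0 = 0 := by simp [hw]
  have hwn : w (n : ℤ) = 1 := by
    simp only [hw, Int.cast_natCast, div_self hnR.ne']
    norm_num
  have hwmono : ∀ t : ℤ, w t ≤ w (t + 1) := by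
    intro t
    exact min_le_min le_rfl (max_le_max le_rfl
      (div_le_div_of_nonneg_right (by push_cast; linarith) hnR.le))
  have hwstep : ∀ t : ℤ, w (t + 1) ≤ w t + 1 / (n : ℝ) := by
    intro t
    have hc : (0 : ℝ) ≤ 1 / (n : ℝ) := by positivity
    have e : ((t + 1 : ℤ) : ℝ) / (n : ℝ) = (t : ℝ) / (n : ℝ) + 1 / (n : ℝ) := by
      push_cast; ring
    calc w (t + 1) = min 1 (max 0 (((t + 1 : ℤ) : ℝ) / (n : ℝ))) := rfl
      _ = min 1 (max 0 ((t : ℝ) / (n : ℝ) + 1 / (n : ℝ))) := by rw [e]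
      _ ≤ min 1 (max 0 ((t : ℝ) / (n : ℝ)) + 1 / (n : ℝ)) := by
          refine min_le_min le_rfl (max_le ?_ ?_)
          · positivity
          · exact add_le_add (le_max_right _ _) le_rfl
      _ ≤ min (1 + 1 / (n : ℝ)) (max 0 ((t : ℝ) / (n : ℝ)) + 1 / (n : ℝ)) :=
          min_le_min (le_add_of_nonneg_right hc) le_rfl
      _ = w t + 1 / (n : ℝ) := by rw [hw, min_add_add_right]
  set x : ℤ → Measure M := fun t =>
    (1 - ENNReal.ofReal (w t)) • Measure.map ⇑(h.toEquiv ^ t) ζ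
      + ENNReal.ofReal (w t) • Measure.map ⇑(h.toEquiv ^ (t - (n : ℤ))) ξ with hx
  have hmapprobζ : ∀ t : ℤ, IsProbabilityMeasure (Measure.map ⇑(h.toEquiv ^ t) ζ) :=
    fun t => Measure.isProbabilityMeasure_map (measurable_hzpow h t).aemeasurable
  have hmapprobξ : ∀ t : ℤ, IsProbabilityMeasure (Measure.map ⇑(h.toEquiv ^ t) ξ) :=
    fun t => Measure.isProbabilityMeasure_map (measurable_hzpow h t).aemeasurable
  have hxprob : ∀ t : ℤ, IsProbabilityMeasure (x t) := by
    intro t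
    haveI := hmapprobζ t
    haveI := hmapprobξ (t - (n : ℤ))
    exact interp_isProbability (ENNReal.ofReal_le_one.2 (hw_le_one t)) _ _
  have hxpseudo : ∀ t : ℤ, prohorovDist (Measure.map (⇑h) (x t)) (x (t + 1)) ≤ δ := by
    intro t
    haveI := hmapprobζ (t + 1)
    haveI := hmapprobξ (t + 1 - (n : ℤ))
    have hmap : Measure.map (⇑h) (x t) =
        (1 - ENNReal.ofReal (w t)) • Measure.map ⇑(h.toEquiv ^ (t + 1)) ζ
          + ENNReal.ofReal (w t) • Measure.map ⇑(h.toEquiv ^ (t + 1 - (n : ℤ))) ξ := by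
      rw [hx]
      simp only
      rw [Measure.map_add _ _ h.continuous.measurable, Measure.map_smul, Measure.map_smul,
        map_h_map_zpow, map_h_map_zpow]
      have he : t - (n : ℤ) + 1 = t + 1 - (n : ℤ) := by ring
      rw [he]
    have hx1 : x (t + 1) =
        (1 - ENNReal.ofReal (w (t + 1))) • Measure.map ⇑(h.toEquiv ^ (t + 1)) ζ
          + ENNReal.ofReal (w (t + 1)) • Measure.map ⇑(h.toEquiv ^ (t + 1 - (n : ℤ))) ξ := rfl
    rw [hmap, hx1]
    calc prohorovDist _ _ ≤ w (t + 1) - w t :=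
          prohorovDist_interp_le _ _ (hw_nonneg t) (hwmono t) (hw_le_one (t + 1))
      _ ≤ 1 / (n : ℝ) := by have := hwstep t; linarith
      _ ≤ δ := hinv
  obtain ⟨η, hηprob, hsh⟩ := hWS x hxprob hxpseudo
  obtain ⟨m₀, hm₀⟩ := hsh 0
  obtain ⟨m₁, hm₁⟩ := hsh (n : ℤ)
  have hx0 : x 0 = ζ := by
    rw [hx]
    simp only [hw0, ENNReal.ofReal_zero, tsub_zero, one_smul, zero_smul, add_zero, zpow_zero]
    simp [Measure.map_id]
  have hxn : x (n : ℤ) = ξ := by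
    rw [hx]
    simp only [hwn, ENNReal.ofReal_one, tsub_self, zero_smul, one_smul, zero_add, sub_self,
      zpow_zero]
    simp [Measure.map_id]
  rw [hx0] at hm₀
  rw [hxn] at hm₁
  exact ⟨η, hηprob, m₀, m₁, hm₀, hm₁⟩

end Chain

end ProhorovAux

open ProhorovAux in
/-- If a homeomorphism `h` of a compact metric space is not topologically transitive, then
the induced map `h̃` on probability measures does not have the weak shadowing property. -/
theorem not_weakShadowing_of_not_transitive {M : Type*} [MetricSpace M] [CompactSpace M]
    [MeasurableSpace M] [BorelSpace M] (h : M ≃ₜ M)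
    (hnt : ¬ ∀ U V : Set M, IsOpen U → IsOpen V → U.Nonempty → V.Nonempty →
      ∃ k : ℕ, ((⇑h)^[k] '' U ∩ V).Nonempty) :
    ¬ ∀ ε > (0 : ℝ), ∃ δ > (0 : ℝ), ∀ x : ℤ → Measure M,
        (∀ n : ℤ, IsProbabilityMeasure (x n)) →
        (∀ n : ℤ, prohorovDist (Measure.map (⇑h) (x n)) (x (n + 1)) ≤ δ) →
        ∃ η : Measure M, IsProbabilityMeasure η ∧
          ∀ n : ℤ, ∃ m : ℤ, prohorovDist (x n) (Measure.map (⇑(h.toEquiv ^ m)) η) < ε := by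
  intro hWS
  push_neg at hnt
  obtain ⟨U, V, hUo, hVo, hUne, hVne, hbad⟩ := hnt
  obtain ⟨u, hu⟩ := hUne
  obtain ⟨v, hv⟩ := hVne
  obtain ⟨ru, hru, hbu⟩ := Metric.isOpen_iff.1 hUo u hu
  obtain ⟨rv, hrv, hbv⟩ := Metric.isOpen_iff.1 hVo v hv
  set r : ℝ := min ru rv with hrdef
  have hrpos : 0 < r := lt_min hru hrv
  have hbu' : ball u r ⊆ U := (ball_subset_ball (min_le_left _ _)).trans hbu
  have hbv' : ball v r ⊆ V := (ball_subset_ball (min_le_right _ _)).trans hbv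
  -- the backward invariant closed set `Z` and its complement `G`
  set Z : Set M := closure (⋃ k : ℕ, (⇑h)^[k] ⁻¹' V) with hZdef
  set G : Set M := Zᶜ with hGdef
  have hZclosed : IsClosed Z := isClosed_closure
  have hGopen : IsOpen G := hZclosed.isOpen_compl
  have hVZ : V ⊆ Z := by
    refine subset_trans (fun y hy => ?_) subset_closure
    exact mem_iUnion.2 ⟨0, by simpa using hy⟩
  have hZU : Z ⊆ Uᶜ := by
    refine closure_minimal ?_ (isClosed_compl_iff.2 hUo)
    intro y hy hyU
    obtain ⟨k, hk⟩ := mem_iUnion.1 hy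
    exact (eq_empty_iff_forall_notMem.1 (hbad k)) ((⇑h)^[k] y) ⟨⟨y, hyU, rfl⟩, hk⟩
  have hUG : U ⊆ G := fun y hyU hyZ => hZU hyZ hyU
  have hZpre : ⇑h ⁻¹' Z ⊆ Z := by
    rw [hZdef, Homeomorph.preimage_closure]
    refine closure_mono ?_
    rw [preimage_iUnion]
    refine iUnion_subset fun k => ?_
    have e : ⇑h ⁻¹' ((⇑h)^[k] ⁻¹' V) = (⇑h)^[k + 1] ⁻¹' V := by
      rw [Function.iterate_succ, preimage_comp]
    rw [e]
    exact subset_iUnion (fun k : ℕ => (⇑h)^[k] ⁻¹' V) (k + 1)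
  have hGfwd : ∀ y ∈ G, h y ∈ G := by
    intro y hy hyZ
    exact hy (hZpre hyZ)
  have hvG : ∀ z ∈ G, r ≤ dist v z := by
    intro z hz
    by_contra hlt
    push_neg at hlt
    exact hz (hVZ (hbv' (mem_ball.2 (by rwa [dist_comm]))))
  by_cases hcase : G ⊆ closure (⇑h '' G)
  · -- Case I : `closure G` is fully invariant.
    set S : Set M := closure G with hSdef
    have hSmeas : MeasurableSet S := isClosed_closure.measurableSet
    have himg : ⇑h '' S = S := by
      apply le_antisymm
      · calc ⇑h '' S = closure (⇑h '' G) := Homeomorph.image_closure h G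
          _ ⊆ closure G := closure_minimal
              (by rintro y ⟨g, hg, rfl⟩; exact subset_closure (hGfwd g hg)) isClosed_closure
      · calc S = closure G := rfl
          _ ⊆ closure (closure (⇑h '' G)) := closure_mono hcase
          _ = closure (⇑h '' G) := closure_closure
          _ = ⇑h '' S := (Homeomorph.image_closure h G).symm
    have hpreS : ⇑h ⁻¹' S = S := by
      ext y
      constructor
      · intro hy
        have : h y ∈ ⇑h '' S := by rw [himg]; exact hy
        obtain ⟨z, hz, hzy⟩ := this
        rwa [← h.injective hzy]
      · intro hy
        show h y ∈ S
        rw [← himg]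
        exact mem_image_of_mem _ hy
    have hpreSymm : ⇑h.symm ⁻¹' S = S := by
      rw [Homeomorph.preimage_symm, himg]
    have hzS : ∀ m : ℤ, ⇑(h.toEquiv ^ m) ⁻¹' S = S := by
      intro m
      induction m using Int.induction_on with
      | zero => simp
      | succ k ih =>
          have hcomp : ⇑(h.toEquiv ^ ((k : ℤ) + 1)) = ⇑h ∘ ⇑(h.toEquiv ^ (k : ℤ)) :=
            funext fun y => zpow_succ_apply _ _ _
          rw [hcomp, preimage_comp, hpreS, ih]
      | pred k ih =>
          have hcomp : ⇑(h.toEquiv ^ (-(k : ℤ) - 1)) = ⇑h.symm ∘ ⇑(h.toEquiv ^ (-(k : ℤ))) :=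
            funext fun y => zpow_pred_apply _ _ _
          rw [hcomp, preimage_comp, hpreSymm, ih]
    set ε : ℝ := min r 1 / 4 with hεdef
    have hεpos : 0 < ε := by
      have : 0 < min r 1 := lt_min hrpos one_pos
      positivity
    have hεr : ε ≤ r := by
      have h1 : min r 1 ≤ r := min_le_left _ _
      have h2 : 0 < r := hrpos
      rw [hεdef]; linarith
    have hε1 : ε ≤ 1 / 4 := by
      have h1 : min r 1 ≤ 1 := min_le_right _ _
      rw [hεdef]; linarith
    obtain ⟨δ, hδpos, hWS'⟩ := hWS ε hεpos
    obtain ⟨η, hηprob, m₀, m₁, hm₀, hm₁⟩ :=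
      exists_shadow_pair h hδpos hWS' (Measure.dirac u) (Measure.dirac v)
    haveI := hηprob
    haveI : IsProbabilityMeasure (Measure.map ⇑(h.toEquiv ^ m₀) η) :=
      Measure.isProbabilityMeasure_map (measurable_hzpow h m₀).aemeasurable
    haveI : IsProbabilityMeasure (Measure.map ⇑(h.toEquiv ^ m₁) η) :=
      Measure.isProbabilityMeasure_map (measurable_hzpow h m₁).aemeasurable
    obtain ⟨d0, hd0pos, hd0ε, hd0⟩ := exists_witness hm₀
    obtain ⟨d1, hd1pos, hd1ε, hd1⟩ := exists_witness hm₁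
    have hmapS : ∀ m : ℤ, Measure.map ⇑(h.toEquiv ^ m) η S = η S := by
      intro m
      rw [Measure.map_apply (measurable_hzpow h m) hSmeas, hzS m]
    have hlow : (1 : ℝ≥0∞) ≤ η S + ENNReal.ofReal ε := by
      have h1 := (hd0 {u} (measurableSet_singleton u)).1
      rw [Measure.dirac_apply' _ (measurableSet_singleton u),
        indicator_of_mem (mem_singleton u), Pi.one_apply] at h1
      have hsub : Metric.thickening d0 {u} ⊆ S := by
        rw [Metric.thickening_singleton]
        refine subset_trans (ball_subset_ball (le_trans hd0ε.le hεr)) ?_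
        exact fun y hy => subset_closure (hUG (hbu' hy))
      calc (1 : ℝ≥0∞) ≤ _ := h1
        _ ≤ Measure.map ⇑(h.toEquiv ^ m₀) η S + ENNReal.ofReal ε :=
            add_le_add (measure_mono hsub) (ENNReal.ofReal_le_ofReal hd0ε.le)
        _ = η S + ENNReal.ofReal ε := by rw [hmapS]
    have hvS : ∀ z ∈ S, r ≤ dist v z := by
      have hcl : S ⊆ {z | r ≤ dist v z} :=
        closure_minimal (fun z hz => hvG z hz)
          (isClosed_le continuous_const (continuous_const.dist continuous_id))
      exact fun z hz => hcl hz
    have hvnotin : v ∉ Metric.thickening d1 S := by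
      rw [Metric.mem_thickening_iff]
      rintro ⟨z, hzS, hdist⟩
      have := hvS z hzS
      have : dist v z < r := lt_of_lt_of_le hdist (le_trans hd1ε.le hεr)
      linarith [hvS z hzS]
    have hup : η S ≤ ENNReal.ofReal ε := by
      have h2 := (hd1 S hSmeas).2
      rw [hmapS, Measure.dirac_apply' _ isOpen_thickening.measurableSet,
        indicator_of_notMem hvnotin] at h2
      calc η S ≤ 0 + ENNReal.ofReal d1 := h2
        _ ≤ ENNReal.ofReal ε := by rw [zero_add]; exact ENNReal.ofReal_le_ofReal hd1ε.le
    have hcontr : (1 : ℝ≥0∞) ≤ ENNReal.ofReal (ε + ε) := by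
      calc (1 : ℝ≥0∞) ≤ η S + ENNReal.ofReal ε := hlow
        _ ≤ ENNReal.ofReal ε + ENNReal.ofReal ε := add_le_add hup le_rfl
        _ = ENNReal.ofReal (ε + ε) := (ENNReal.ofReal_add hεpos.le hεpos.le).symm
    rw [ENNReal.one_le_ofReal] at hcontr
    linarith
  · -- Case II : there is a deep "gateway" point `d₁ ∈ G \ closure (h '' G)`.
    obtain ⟨d₁, hd₁G, hd₁n⟩ := not_subset.1 hcase
    set W : Set M := ⇑h '' G with hWdef
    have hWopen : IsOpen W := (Homeomorph.isOpen_image h).2 hGopen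
    have hWne : W.Nonempty := ⟨h u, mem_image_of_mem _ (hUG hu)⟩
    set ρ₁ : ℝ := infDist d₁ W with hρ₁def
    have hρ₁pos : 0 < ρ₁ := by
      have := (IsClosed.notMem_iff_infDist_pos isClosed_closure hWne.closure).1 hd₁n
      rwa [infDist_closure] at this
    have hρ₁le : ∀ z ∈ W, ρ₁ ≤ dist d₁ z := fun z hz => infDist_le_dist_of_mem hz
    obtain ⟨ρ₂, hρ₂pos, hρ₂sub⟩ := Metric.isOpen_iff.1 hGopen d₁ hd₁G
    have hne : u ≠ v := fun e => (hUG hu) (hVZ (e ▸ hv))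
    set ε : ℝ := min (min ρ₁ ρ₂) (min r 1) / 8 with hεdef
    have hεpos : 0 < ε := by
      have : 0 < min (min ρ₁ ρ₂) (min r 1) :=
        lt_min (lt_min hρ₁pos hρ₂pos) (lt_min hrpos one_pos)
      positivity
    have hερ₁ : ε < ρ₁ := by
      have h1 : min (min ρ₁ ρ₂) (min r 1) ≤ ρ₁ := le_trans (min_le_left _ _) (min_le_left _ _)
      rw [hεdef]; linarith
    have hερ₂ : ε < ρ₂ := by
      have h1 : min (min ρ₁ ρ₂) (min r 1) ≤ ρ₂ := le_trans (min_le_left _ _) (min_le_right _ _)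
      rw [hεdef]; linarith
    have hεr : ε < r := by
      have h1 : min (min ρ₁ ρ₂) (min r 1) ≤ r := le_trans (min_le_right _ _) (min_le_left _ _)
      rw [hεdef]; linarith
    have hε1 : ε ≤ 1 / 8 := by
      have h1 : min (min ρ₁ ρ₂) (min r 1) ≤ 1 := le_trans (min_le_right _ _) (min_le_right _ _)
      rw [hεdef]; linarith
    obtain ⟨δ, hδpos, hWS'⟩ := hWS ε hεpos
    set ζhalf : Measure M :=
      ENNReal.ofReal (1 / 2) • Measure.dirac u + ENNReal.ofReal (1 / 2) • Measure.dirac v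
      with hζdef
    haveI hζprob : IsProbabilityMeasure ζhalf := by
      constructor
      rw [hζdef]
      simp only [Measure.coe_add, Pi.add_apply, Measure.smul_apply, smul_eq_mul, measure_univ,
        mul_one]
      rw [← ENNReal.ofReal_add (by norm_num) (by norm_num)]
      norm_num
    obtain ⟨η, hηprob, m₀, m₁, hm₀, hm₁⟩ :=
      exists_shadow_pair h hδpos hWS' ζhalf (Measure.dirac d₁)
    haveI := hηprob
    haveI : IsProbabilityMeasure (Measure.map ⇑(h.toEquiv ^ m₀) η) :=
      Measure.isProbabilityMeasure_map (measurable_hzpow h m₀).aemeasurable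
    haveI : IsProbabilityMeasure (Measure.map ⇑(h.toEquiv ^ m₁) η) :=
      Measure.isProbabilityMeasure_map (measurable_hzpow h m₁).aemeasurable
    obtain ⟨d0, hd0pos, hd0ε, hd0⟩ := exists_witness hm₀
    obtain ⟨d1, hd1pos, hd1ε, hd1⟩ := exists_witness hm₁
    set γ : ℤ → ℝ≥0∞ := fun t => η (⇑(h.toEquiv ^ t) ⁻¹' G) with hγdef
    have hγmono : Monotone γ := by
      refine monotone_int_of_le_succ fun t => measure_mono fun y hy => ?_
      show (h.toEquiv ^ (t + 1)) y ∈ G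
      rw [zpow_succ_apply]
      exact hGfwd _ hy
    have hγeq : ∀ m : ℤ, Measure.map ⇑(h.toEquiv ^ m) η G = γ m := by
      intro m
      rw [Measure.map_apply (measurable_hzpow h m) hGopen.measurableSet]
    -- reading (a): 1 ≤ γ m₁ + ε
    have hreadA : (1 : ℝ≥0∞) ≤ γ m₁ + ENNReal.ofReal ε := by
      have h1 := (hd1 {d₁} (measurableSet_singleton d₁)).1
      rw [Measure.dirac_apply' _ (measurableSet_singleton d₁),
        indicator_of_mem (mem_singleton d₁), Pi.one_apply] at h1
      have hsub : Metric.thickening d1 {d₁} ⊆ G := by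
        rw [Metric.thickening_singleton]
        exact subset_trans (ball_subset_ball (le_trans hd1ε.le hερ₂.le)) hρ₂sub
      calc (1 : ℝ≥0∞) ≤ _ := h1
        _ ≤ Measure.map ⇑(h.toEquiv ^ m₁) η G + ENNReal.ofReal ε :=
            add_le_add (measure_mono hsub) (ENNReal.ofReal_le_ofReal hd1ε.le)
        _ = γ m₁ + ENNReal.ofReal ε := by rw [hγeq]
    -- reading (b): γ (m₁ - 1) ≤ ε
    have hreadB : γ (m₁ - 1) ≤ ENNReal.ofReal ε := by
      have hWpre : ⇑(h.toEquiv ^ (m₁ - 1)) ⁻¹' G = ⇑(h.toEquiv ^ m₁) ⁻¹' W := by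
        ext y
        have he : (h.toEquiv ^ m₁) y = h ((h.toEquiv ^ (m₁ - 1)) y) := by
          have := zpow_succ_apply h.toEquiv (m₁ - 1) y
          rwa [sub_add_cancel] at this
        constructor
        · intro hy
          exact ⟨(h.toEquiv ^ (m₁ - 1)) y, hy, he.symm⟩
        · rintro ⟨g, hg, hgy⟩
          rw [he] at hgy
          exact mem_preimage.2 (h.injective hgy ▸ hg)
      have hd₁notin : d₁ ∉ Metric.thickening d1 W := by
        rw [Metric.mem_thickening_iff]
        rintro ⟨z, hzW, hdist⟩
        have := hρ₁le z hzW
        have : dist d₁ z < ρ₁ := lt_of_lt_of_le hdist (le_trans hd1ε.le hερ₁.le)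
        linarith [hρ₁le z hzW]
      have h2 := (hd1 W hWopen.measurableSet).2
      rw [Measure.map_apply (measurable_hzpow h m₁) hWopen.measurableSet,
        Measure.dirac_apply' _ isOpen_thickening.measurableSet,
        indicator_of_notMem hd₁notin] at h2
      calc γ (m₁ - 1) = η (⇑(h.toEquiv ^ m₁) ⁻¹' W) := by rw [hγdef]; simp only; rw [hWpre]
        _ ≤ 0 + ENNReal.ofReal d1 := h2
        _ ≤ ENNReal.ofReal ε := by rw [zero_add]; exact ENNReal.ofReal_le_ofReal hd1ε.le
    -- reading (c): 1/2 ≤ γ m₀ + ε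
    have hreadC : ENNReal.ofReal (1 / 2) ≤ γ m₀ + ENNReal.ofReal ε := by
      have h1 := (hd0 {u} (measurableSet_singleton u)).1
      have hζu : ζhalf {u} = ENNReal.ofReal (1 / 2) := by
        rw [hζdef]
        simp only [Measure.coe_add, Pi.add_apply, Measure.smul_apply, smul_eq_mul]
        rw [Measure.dirac_apply' _ (measurableSet_singleton u),
          Measure.dirac_apply' _ (measurableSet_singleton u),
          indicator_of_mem (mem_singleton u),
          indicator_of_notMem (by simpa using hne.symm)]
        simp
      rw [hζu] at h1
      have hsub : Metric.thickening d0 {u} ⊆ G := by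
        rw [Metric.thickening_singleton]
        refine subset_trans (ball_subset_ball (le_trans hd0ε.le hεr.le)) ?_
        exact fun y hy => hUG (hbu' hy)
      calc ENNReal.ofReal (1 / 2) ≤ _ := h1
        _ ≤ Measure.map ⇑(h.toEquiv ^ m₀) η G + ENNReal.ofReal ε :=
            add_le_add (measure_mono hsub) (ENNReal.ofReal_le_ofReal hd0ε.le)
        _ = γ m₀ + ENNReal.ofReal ε := by rw [hγeq]
    -- reading (d): γ m₀ ≤ 1/2 + ε
    have hreadD : γ m₀ ≤ ENNReal.ofReal (1 / 2) + ENNReal.ofReal ε := by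
      have h2 := (hd0 G hGopen.measurableSet).2
      have hζthick : ζhalf (Metric.thickening d0 G) = ENNReal.ofReal (1 / 2) := by
        have huin : u ∈ Metric.thickening d0 G :=
          self_subset_thickening hd0pos G (hUG hu)
        have hvnotin : v ∉ Metric.thickening d0 G := by
          rw [Metric.mem_thickening_iff]
          rintro ⟨z, hzG, hdist⟩
          have := hvG z hzG
          have : dist v z < r := lt_of_lt_of_le hdist (le_trans hd0ε.le hεr.le)
          linarith [hvG z hzG]
        rw [hζdef]
        simp only [Measure.coe_add, Pi.add_apply, Measure.smul_apply, smul_eq_mul]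
        rw [Measure.dirac_apply' _ isOpen_thickening.measurableSet,
          Measure.dirac_apply' _ isOpen_thickening.measurableSet,
          indicator_of_mem huin, indicator_of_notMem hvnotin]
        simp
      rw [hγeq m₀] at h2
      calc γ m₀ ≤ ζhalf (Metric.thickening d0 G) + ENNReal.ofReal d0 := h2
        _ = ENNReal.ofReal (1 / 2) + ENNReal.ofReal d0 := by rw [hζthick]
        _ ≤ ENNReal.ofReal (1 / 2) + ENNReal.ofReal ε :=
            add_le_add le_rfl (ENNReal.ofReal_le_ofReal hd0ε.le)
    -- the clash
    rcases le_or_gt m₁ m₀ with hc | hc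
    · have hγle : γ m₁ ≤ γ m₀ := hγmono hc
      have hcontr : (1 : ℝ≥0∞) ≤ ENNReal.ofReal (1 / 2 + ε + ε) := by
        calc (1 : ℝ≥0∞) ≤ γ m₁ + ENNReal.ofReal ε := hreadA
          _ ≤ γ m₀ + ENNReal.ofReal ε := add_le_add hγle le_rfl
          _ ≤ (ENNReal.ofReal (1 / 2) + ENNReal.ofReal ε) + ENNReal.ofReal ε :=
              add_le_add hreadD le_rfl
          _ = ENNReal.ofReal (1 / 2 + ε + ε) := by
              rw [← ENNReal.ofReal_add (by norm_num) hεpos.le,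
                ← ENNReal.ofReal_add (by positivity) hεpos.le]
      rw [ENNReal.one_le_ofReal] at hcontr
      linarith
    · have hle : m₀ ≤ m₁ - 1 := by omega
      have hγle : γ m₀ ≤ γ (m₁ - 1) := hγmono hle
      have hcontr : ENNReal.ofReal (1 / 2) ≤ ENNReal.ofReal (ε + ε) := by
        calc ENNReal.ofReal (1 / 2) ≤ γ m₀ + ENNReal.ofReal ε := hreadC
          _ ≤ γ (m₁ - 1) + ENNReal.ofReal ε := add_le_add hγle le_rfl
          _ ≤ ENNReal.ofReal ε + ENNReal.ofReal ε := add_le_add hreadB le_rfl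
          _ = ENNReal.ofReal (ε + ε) := (ENNReal.ofReal_add hεpos.le hεpos.le).symm
      rw [ENNReal.ofReal_le_ofReal_iff (by positivity)] at hcontr
      linarith
end

section
/- If a homeomorphism h of a compact metric space satisfies: the induced map h̃ on probability measures is topologically transitive, then h is topologically transitive. -/
open MeasureTheory Metric Set
open scoped ENNReal Topology
open Filter

/-- If the induced map `h̃` on the space of probability measures (with the topology of weak
convergence) is topologically transitive, then `h` is topologically transitive. -/
theorem transitive_of_induced_transitive {M : Type*} [MetricSpace M] [CompactSpace M]
    [MeasurableSpace M] [BorelSpace M] (h : M ≃ₜ M)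
    (ht : ∀ U V : Set (ProbabilityMeasure M), IsOpen U → IsOpen V →
      U.Nonempty → V.Nonempty →
      ∃ k : ℕ, ((fun μ : ProbabilityMeasure M =>
        μ.map h.continuous.measurable.aemeasurable)^[k] '' U ∩ V).Nonempty) :
    ∀ U V : Set M, IsOpen U → IsOpen V → U.Nonempty → V.Nonempty →
      ∃ k : ℕ, ((⇑h)^[k] '' U ∩ V).Nonempty := by
  intro U V hU hV hUne hVne
  obtain ⟨x, hx⟩ := hUne
  obtain ⟨y, hy⟩ := hVne
  set T : ProbabilityMeasure M → ProbabilityMeasure M :=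
    fun μ => μ.map h.continuous.measurable.aemeasurable with hT
  -- The set of measures giving mass > 1/2 to an open set is open (portmanteau).
  have openS : ∀ (W : Set M), IsOpen W →
      IsOpen {μ : ProbabilityMeasure M | (1 : ℝ≥0∞) / 2 < (μ : Measure M) W} := by
    intro W hW
    rw [isOpen_iff_mem_nhds]
    intro μ hμ
    have hle : (μ : Measure M) W ≤
        (𝓝 μ).liminf fun ν : ProbabilityMeasure M => (ν : Measure M) W :=
      ProbabilityMeasure.le_liminf_measure_open_of_tendsto (μs := id) tendsto_id hW
    exact Filter.eventually_lt_of_lt_liminf (lt_of_lt_of_le hμ hle)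
  -- Dirac measures give nonemptiness.
  have dirac_mem : ∀ (W : Set M) (z : M), IsOpen W → z ∈ W →
      (⟨Measure.dirac z, inferInstance⟩ : ProbabilityMeasure M) ∈
        {μ : ProbabilityMeasure M | (1 : ℝ≥0∞) / 2 < (μ : Measure M) W} := by
    intro W z hW hz
    have : (Measure.dirac z) W = 1 := by
      rw [Measure.dirac_apply' z hW.measurableSet]
      simp [hz]
    show (1 : ℝ≥0∞) / 2 < (Measure.dirac z) W
    rw [this]
    exact ENNReal.half_lt_self one_ne_zero ENNReal.one_ne_top
  obtain ⟨k, μ, ⟨ν, hνU, rfl⟩, hμV⟩ :=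
    ht {μ | (1 : ℝ≥0∞) / 2 < (μ : Measure M) U}
       {μ | (1 : ℝ≥0∞) / 2 < (μ : Measure M) V}
       (openS U hU) (openS V hV)
       ⟨_, dirac_mem U x hU hx⟩ ⟨_, dirac_mem V y hV hy⟩
  -- Identify iterates of T with pushforward along iterates of h.
  have key : ∀ (k : ℕ) (ν : ProbabilityMeasure M) (W : Set M), MeasurableSet W →
      ((T^[k] ν : ProbabilityMeasure M) : Measure M) W
        = (ν : Measure M) ((⇑h)^[k] ⁻¹' W) := by
    intro k
    induction k with
    | zero => intro ν W _; simp
    | succ n ih =>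
      intro ν W hW
      rw [Function.iterate_succ_apply', Function.iterate_succ']
      have hmap : ((T (T^[n] ν) : ProbabilityMeasure M) : Measure M) W
          = ((T^[n] ν : ProbabilityMeasure M) : Measure M) (⇑h ⁻¹' W) := by
        rw [hT]
        simp only
        rw [ProbabilityMeasure.toMeasure_map,
          Measure.map_apply h.continuous.measurable hW]
      rw [hmap, ih ν _ (hW.preimage h.continuous.measurable)]
      rfl
  have hνU' : (1 : ℝ≥0∞) / 2 < (ν : Measure M) U := hνU
  have hνV' : (1 : ℝ≥0∞) / 2 < (ν : Measure M) ((⇑h)^[k] ⁻¹' V) := by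
    rw [← key k ν V hV.measurableSet]; exact hμV
  set W : Set M := (⇑h)^[k] ⁻¹' V with hWdef
  have hWm : MeasurableSet W := hV.measurableSet.preimage (h.continuous.measurable.iterate k)
  have hne : (U ∩ W).Nonempty := by
    by_contra hcon
    rw [Set.not_nonempty_iff_eq_empty] at hcon
    have hdisj : Disjoint U W := Set.disjoint_iff_inter_eq_empty.mpr hcon
    have hsum : (ν : Measure M) U + (ν : Measure M) W = (ν : Measure M) (U ∪ W) :=
      (measure_union hdisj hWm).symm
    have hle1 : (ν : Measure M) (U ∪ W) ≤ 1 := prob_le_one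
    have hgt1 : (1 : ℝ≥0∞) < (ν : Measure M) U + (ν : Measure M) W := by
      calc (1 : ℝ≥0∞) = 1 / 2 + 1 / 2 := by rw [ENNReal.add_halves]
        _ < (ν : Measure M) U + (ν : Measure M) W := ENNReal.add_lt_add hνU' hνV'
    rw [hsum] at hgt1
    exact absurd hle1 (not_le.mpr hgt1)
  obtain ⟨z, hzU, hzW⟩ := hne
  exact ⟨k, (⇑h)^[k] z, ⟨z, hzU, rfl⟩, hzW⟩
end

section
/- Given 0 < δ < 1, there exists k₀ ∈ ℕ such that for any homeomorphism h of a compact metric space M, any Borel probability measures μ, ν on M, and any k ≥ k₀, there is a δ-chain of the induced map h̃ of length k from μ to ν (i.e., measures μ₀ = μ, μ₁, …, μ_k = ν with d_P(h̃(μ_i), μ_{i+1}) < δ for 0 ≤ i < k). -/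
open MeasureTheory Metric Set

open scoped ENNReal

lemma prohorovDist_lt_of_forall {M : Type*} [MetricSpace M] [MeasurableSpace M]
    {μ ν : Measure M} {ε δ : ℝ} (hε : 0 < ε) (hεδ : ε < δ)
    (H : ∀ X : Set M, MeasurableSet X →
      μ X ≤ ν X + ENNReal.ofReal ε ∧ ν X ≤ μ X + ENNReal.ofReal ε) :
    prohorovDist μ ν < δ := by
  have hmem : ε ∈ {t : ℝ | 0 < t ∧ ∀ X : Set M, MeasurableSet X →
      μ X ≤ ν (Metric.thickening t X) + ENNReal.ofReal t ∧
      ν X ≤ μ (Metric.thickening t X) + ENNReal.ofReal t} := by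
    refine ⟨hε, fun X hX => ?_⟩
    obtain ⟨h1, h2⟩ := H X hX
    have hsub : X ⊆ Metric.thickening ε X := Metric.self_subset_thickening hε X
    exact ⟨h1.trans (add_le_add_left (measure_mono hsub) _),
           h2.trans (add_le_add_left (measure_mono hsub) _)⟩
  exact lt_of_le_of_lt (csInf_le ⟨0, fun x hx => le_of_lt hx.1⟩ hmem) hεδ

universe u

/-- Theorem (ChainH): given `0 < δ < 1` there is `k₀` such that for any homeomorphism `h` of
a compact metric space, any Borel probability measures `μ, ν` and any `k ≥ k₀`, there is a
`δ`-chain of the induced map `h̃` of length `k` from `μ` to `ν`. -/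
theorem exists_chain_between_measures {δ : ℝ} (hδ0 : 0 < δ) (hδ1 : δ < 1) :
    ∃ k₀ : ℕ, ∀ (M : Type u) [MetricSpace M] [CompactSpace M]
      [MeasurableSpace M] [BorelSpace M] (h : M ≃ₜ M),
      ∀ (μ ν : Measure M), IsProbabilityMeasure μ → IsProbabilityMeasure ν →
      ∀ k ≥ k₀, ∃ c : ℕ → Measure M,
        (∀ i, IsProbabilityMeasure (c i)) ∧ c 0 = μ ∧ c k = ν ∧
        ∀ i < k, prohorovDist (Measure.map (⇑h) (c i)) (c (i + 1)) < δ := by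
  refine ⟨⌈2 / δ⌉₊ + 1, fun M _ _ _ _ h μ ν hμ hν k hk => ?_⟩
  have hk0 : 0 < k := lt_of_lt_of_le (Nat.succ_pos _) hk
  have hkR : (2 : ℝ) / δ < k := by
    have h1 : (2 : ℝ) / δ ≤ ⌈2 / δ⌉₊ := Nat.le_ceil _
    have h2 : (⌈2 / δ⌉₊ : ℝ) < k := by exact_mod_cast lt_of_lt_of_le (Nat.lt_succ_self _) hk
    linarith
  have hkne : ((k : ℕ) : ℝ≥0∞) ≠ 0 := by
    exact_mod_cast hk0.ne'
  have hkne' : ((k : ℕ) : ℝ≥0∞) ≠ ⊤ := ENNReal.natCast_ne_top k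
  -- key numeric bound : 1/k ≤ ofReal (δ/2)
  have hkey : (1 : ℝ≥0∞) / k ≤ ENNReal.ofReal (δ / 2) := by
    have hkpos : (0 : ℝ) < k := by exact_mod_cast hk0
    have h1k : (1 : ℝ) / k ≤ δ / 2 := by
      rw [div_le_div_iff₀ hkpos (by norm_num)]
      rw [div_lt_iff₀ hδ0] at hkR
      nlinarith
    calc (1 : ℝ≥0∞) / k = ENNReal.ofReal (1 / k) := by
          rw [ENNReal.ofReal_div_of_pos hkpos]; simp
      _ ≤ ENNReal.ofReal (δ / 2) := ENNReal.ofReal_le_ofReal h1k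
  -- measurability
  have hm : Measurable (⇑h) := h.continuous.measurable
  have hms : Measurable (⇑h.symm) := h.symm.continuous.measurable
  have hmi : ∀ n : ℕ, Measurable ((⇑h)^[n]) := fun n => hm.iterate n
  have hmsi : ∀ n : ℕ, Measurable ((⇑h.symm)^[n]) := fun n => hms.iterate n
  -- the ingredients
  set P : ℕ → Measure M := fun i => Measure.map ((⇑h)^[i]) μ with hP
  set Q : ℕ → Measure M := fun j => Measure.map ((⇑h.symm)^[j]) ν with hQ
  haveI hPprob : ∀ i, IsProbabilityMeasure (P i) :=
    fun i => Measure.isProbabilityMeasure_map (hmi i).aemeasurable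
  haveI hQprob : ∀ j, IsProbabilityMeasure (Q j) :=
    fun j => Measure.isProbabilityMeasure_map (hmsi j).aemeasurable
  set a : ℕ → ℝ≥0∞ := fun i => ((k - i : ℕ) : ℝ≥0∞) / k with ha
  set b : ℕ → ℝ≥0∞ := fun i => ((i : ℕ) : ℝ≥0∞) / k with hb
  have hab : ∀ i ≤ k, a i + b i = 1 := by
    intro i hi
    have : ((k - i : ℕ) : ℝ≥0∞) + i = k := by
      exact_mod_cast congrArg (Nat.cast : ℕ → ℝ≥0∞) (Nat.sub_add_cancel hi)
    rw [ha, hb]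
    simp only
    rw [ENNReal.div_add_div_same, this, ENNReal.div_self hkne hkne']
  set c : ℕ → Measure M := fun i =>
    if i ≤ k then a i • P i + b i • Q (k - i) else ν with hc
  refine ⟨c, ?_, ?_, ?_, ?_⟩
  · -- probability
    intro i
    by_cases hik : i ≤ k
    · constructor
      rw [hc]
      simp only [hik, if_pos]
      rw [Measure.add_apply, Measure.smul_apply, Measure.smul_apply, smul_eq_mul, smul_eq_mul,
        measure_univ, measure_univ, mul_one, mul_one]
      exact hab i hik
    · rw [hc]; simp only [hik, if_neg, not_false_iff]; exact hν
  · -- c 0 = μ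
    rw [hc]
    simp only [Nat.zero_le, if_pos]
    have : a 0 = 1 := by
      rw [ha]; simp [ENNReal.div_self hkne hkne']
    have hb0 : b 0 = 0 := by rw [hb]; simp
    rw [this, hb0, one_smul, zero_smul, add_zero, hP]
    simp [Measure.map_id]
  · -- c k = ν
    rw [hc]
    simp only [le_refl, if_pos]
    have hak : a k = 0 := by rw [ha]; simp
    have hbk : b k = 1 := by rw [hb]; simp [ENNReal.div_self hkne hkne']
    rw [hak, hbk, zero_smul, one_smul, zero_add, hQ]
    simp [Measure.map_id]
  · -- chain condition
    intro i hik
    have hik1 : i + 1 ≤ k := hik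
    have hikle : i ≤ k := le_of_lt hik
    -- compute map of c i
    have hmap : Measure.map (⇑h) (c i) = a i • P (i + 1) + b i • Q (k - (i + 1)) := by
      rw [hc]
      simp only [hikle, if_pos]
      rw [Measure.map_add _ _ hm, Measure.map_smul, Measure.map_smul]
      congr 1
      · congr 1
        rw [hP]
        simp only
        rw [Measure.map_map hm (hmi i), ← Function.iterate_succ']
      · congr 1
        rw [hQ]
        simp only
        have hsub : k - i = (k - (i + 1)) + 1 := by omega
        rw [hsub, Measure.map_map hm (hmsi _)]
        congr 1
        funext x
        rw [Function.iterate_succ']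
        simp
    have hstep : a i = a (i + 1) + 1 / k := by
      rw [ha]
      simp only
      have : ((k - i : ℕ) : ℝ≥0∞) = ((k - (i + 1) : ℕ) : ℝ≥0∞) + 1 := by
        exact_mod_cast congrArg (Nat.cast : ℕ → ℝ≥0∞) (by omega : k - i = (k - (i+1)) + 1)
      rw [this, ENNReal.div_add_div_same]
    have hstep' : b (i + 1) = b i + 1 / k := by
      rw [hb]
      simp only
      rw [Nat.cast_add, Nat.cast_one, ENNReal.div_add_div_same]
    -- apply the criterion with ε = δ/2
    refine prohorovDist_lt_of_forall (ε := δ / 2) (by linarith) (by linarith) (fun X hX => ?_)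
    have hcX : Measure.map (⇑h) (c i) X = a i * P (i + 1) X + b i * Q (k - (i + 1)) X := by
      rw [hmap, Measure.add_apply, Measure.smul_apply, Measure.smul_apply, smul_eq_mul, smul_eq_mul]
    have hc1X : c (i + 1) X = a (i + 1) * P (i + 1) X + b (i + 1) * Q (k - (i + 1)) X := by
      rw [hc]
      simp only [hik1, if_pos]
      rw [Measure.add_apply, Measure.smul_apply, Measure.smul_apply, smul_eq_mul, smul_eq_mul]
    have hPle : P (i + 1) X ≤ 1 := prob_le_one
    have hQle : Q (k - (i + 1)) X ≤ 1 := prob_le_one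
    constructor
    · rw [hcX, hc1X]
      calc a i * P (i + 1) X + b i * Q (k - (i + 1)) X
          = a (i + 1) * P (i + 1) X + (1 / k) * P (i + 1) X + b i * Q (k - (i + 1)) X := by
            rw [hstep, add_mul]
        _ ≤ a (i + 1) * P (i + 1) X + b (i + 1) * Q (k - (i + 1)) X + ENNReal.ofReal (δ / 2) := by
            have h1 : (1 / (k : ℝ≥0∞)) * P (i + 1) X ≤ ENNReal.ofReal (δ / 2) :=
              le_trans (mul_le_of_le_one_right zero_le hPle) hkey
            have h2 : b i * Q (k - (i + 1)) X ≤ b (i + 1) * Q (k - (i + 1)) X :=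
              mul_le_mul_left (by rw [hstep']; exact le_self_add) _
            calc a (i + 1) * P (i + 1) X + (1 / (k : ℝ≥0∞)) * P (i + 1) X + b i * Q (k - (i + 1)) X
                ≤ a (i + 1) * P (i + 1) X + ENNReal.ofReal (δ / 2) + b (i + 1) * Q (k - (i + 1)) X := by
                  exact add_le_add (add_le_add_right h1 _) h2
              _ = a (i + 1) * P (i + 1) X + b (i + 1) * Q (k - (i + 1)) X + ENNReal.ofReal (δ / 2) := by
                  ring
    · rw [hcX, hc1X]
      calc a (i + 1) * P (i + 1) X + b (i + 1) * Q (k - (i + 1)) X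
          = a (i + 1) * P (i + 1) X + (b i * Q (k - (i + 1)) X + (1 / k) * Q (k - (i + 1)) X) := by
            rw [hstep', add_mul]
        _ ≤ a i * P (i + 1) X + b i * Q (k - (i + 1)) X + ENNReal.ofReal (δ / 2) := by
            have h1 : (1 / (k : ℝ≥0∞)) * Q (k - (i + 1)) X ≤ ENNReal.ofReal (δ / 2) :=
              le_trans (mul_le_of_le_one_right zero_le hQle) hkey
            have h2 : a (i + 1) * P (i + 1) X ≤ a i * P (i + 1) X :=
              mul_le_mul_left (by rw [hstep]; exact le_self_add) _
            calc a (i + 1) * P (i + 1) X + (b i * Q (k - (i + 1)) X + (1 / (k : ℝ≥0∞)) * Q (k - (i + 1)) X)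
                ≤ a i * P (i + 1) X + (b i * Q (k - (i + 1)) X + ENNReal.ofReal (δ / 2)) :=
                  add_le_add h2 (add_le_add_right h1 _)
              _ = a i * P (i + 1) X + b i * Q (k - (i + 1)) X + ENNReal.ofReal (δ / 2) := by
                  rw [add_assoc]
end

section
/- Let f be a continuous self-map of the Cantor space, let 𝒫 be a finite clopen partition, and suppose a is an element of 𝒫 with f^{-q}(a) = ∅ for some q ∈ ℕ. If μ is a chain recurrent point of the induced map f̃ on probability measures, then μ(a) = 0. -/
open MeasureTheory Metric Set

-- The Cantor space `{0,1}^ℕ` is endowed with a compatible metric in which the distance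
-- between two distinct points is determined by the first coordinate where they differ.
attribute [local instance] PiNat.metricSpace

/-- If `P` is a finite clopen partition of the Cantor space, `a ∈ P` satisfies
`f^{-q}(a) = ∅` for some `q ≥ 1`, and `μ` is a chain recurrent point of the induced map
`f̃` on probability measures, then `μ(a) = 0`. -/
theorem measure_eq_zero_of_chainRecurrent
    (f : (ℕ → Bool) → (ℕ → Bool)) (hf : Continuous f)
    (P : Finset (Set (ℕ → Bool)))
    (hclopen : ∀ a ∈ P, IsClopen a) (hne : ∀ a ∈ P, a.Nonempty)
    (hdisj : (P : Set (Set (ℕ → Bool))).PairwiseDisjoint id)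
    (hcover : ⋃ a ∈ P, a = Set.univ)
    (a : Set (ℕ → Bool)) (ha : a ∈ P)
    (q : ℕ) (hq : 1 ≤ q) (hqa : f^[q] ⁻¹' a = ∅)
    (μ : Measure (ℕ → Bool)) [IsProbabilityMeasure μ]
    (hcr : ∀ δ > (0 : ℝ), ∃ k : ℕ, 1 ≤ k ∧ ∃ c : ℕ → Measure (ℕ → Bool),
      (∀ i, IsProbabilityMeasure (c i)) ∧ c 0 = μ ∧ c k = μ ∧
      ∀ i < k, prohorovDist (Measure.map f (c i)) (c (i + 1)) < δ) :
    μ a = 0 := by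
  -- preimage sets
  set X : ℕ → Set (ℕ → Bool) := fun j => f^[j] ⁻¹' a with hXdef
  have hXclopen : ∀ j, IsClopen (X j) := fun j => (hclopen a ha).preimage (hf.iterate j)
  have hXmeas : ∀ j, MeasurableSet (X j) := fun j => (hXclopen j).1.measurableSet
  have hXsucc : ∀ j, f ⁻¹' X j = X (j + 1) := by
    intro j
    show f ⁻¹' (f^[j] ⁻¹' a) = f^[j + 1] ⁻¹' a
    rw [Function.iterate_succ, Set.preimage_comp]
  have hXempty : ∀ j, q ≤ j → X j = ∅ := by
    intro j hj
    ext x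
    simp only [hXdef, Set.mem_preimage, Set.mem_empty_iff_false, iff_false]
    intro hx
    have : f^[j] x = f^[q] (f^[j - q] x) := by
      rw [← Function.iterate_add_apply, Nat.add_sub_cancel' hj]
    have : f^[j - q] x ∈ f^[q] ⁻¹' a := by rw [Set.mem_preimage, ← this]; exact hx
    rw [hqa] at this
    exact this
  -- a uniform thickening radius
  have hthick : ∀ n : ℕ, ∃ ε > (0 : ℝ), ∀ j < n, thickening ε (X j) ⊆ X j := by
    intro n
    induction n with
    | zero => exact ⟨1, one_pos, fun j hj => absurd hj (Nat.not_lt_zero j)⟩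
    | succ n ih =>
      obtain ⟨ε, hε, hsub⟩ := ih
      obtain ⟨ε', hε', hsub'⟩ :=
        (hXclopen n).1.isCompact.exists_thickening_subset_open (hXclopen n).2 (subset_refl _)
      refine ⟨min ε ε', lt_min hε hε', fun j hj => ?_⟩
      rcases Nat.lt_or_ge j n with h | h
      · exact (thickening_mono (min_le_left _ _) _).trans (hsub j h)
      · have : j = n := by omega
        subst this
        exact (thickening_mono (min_le_right _ _) _).trans hsub'
  obtain ⟨ε, hε, hthickq⟩ := hthick q
  have hthickAll : ∀ (δ' : ℝ), δ' ≤ ε → ∀ j, thickening δ' (X j) ⊆ X j := by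
    intro δ' hδ' j
    rcases Nat.lt_or_ge j q with h | h
    · exact (thickening_mono hδ' _).trans (hthickq j h)
    · rw [hXempty j h, thickening_empty]
  -- the main bound
  have main : ∀ r : ℝ, 0 < r → μ a ≤ ENNReal.ofReal r := by
    intro r hr
    have hq0 : (0 : ℝ) < q := by exact_mod_cast hq
    set δ : ℝ := min ε (r / q) with hδdef
    have hδpos : 0 < δ := lt_min hε (div_pos hr hq0)
    have hδε : δ ≤ ε := min_le_left _ _
    obtain ⟨k, hk, c, hcprob, hc0, hck, hstep⟩ := hcr δ hδpos
    -- one-step estimate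
    have key : ∀ (ν ν' : Measure (ℕ → Bool)), IsProbabilityMeasure ν →
        IsProbabilityMeasure ν' → prohorovDist (Measure.map f ν) ν' < δ →
        ∀ n, ν' (X n) ≤ ν (X (n + 1)) + ENNReal.ofReal δ := by
      intro ν ν' hν hν' hd n
      haveI := hν; haveI := hν'
      haveI : IsProbabilityMeasure (Measure.map f ν) :=
        Measure.isProbabilityMeasure_map hf.measurable.aemeasurable
      set S := {δ' : ℝ | 0 < δ' ∧ ∀ Y : Set (ℕ → Bool), MeasurableSet Y →
        Measure.map f ν Y ≤ ν' (thickening δ' Y) + ENNReal.ofReal δ' ∧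
        ν' Y ≤ Measure.map f ν (thickening δ' Y) + ENNReal.ofReal δ'} with hSdef
      have hS2 : (2 : ℝ) ∈ S := by
        constructor
        · norm_num
        · intro Y hY
          have h1 : (1 : ENNReal) ≤ ENNReal.ofReal 2 := by
            rw [show (2:ℝ) = 1 + 1 by norm_num, ENNReal.ofReal_add one_pos.le one_pos.le]
            simp
          constructor
          · exact le_trans (prob_le_one) (le_trans h1 (le_add_self))
          · exact le_trans (prob_le_one) (le_trans h1 (le_add_self))
      have hd' : sInf S < δ := hd
      obtain ⟨δ', hδ'S, hδ'lt⟩ := exists_lt_of_csInf_lt ⟨2, hS2⟩ hd'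
      obtain ⟨hδ'pos, hcond⟩ := hδ'S
      have h1 : ν' (X n) ≤ Measure.map f ν (thickening δ' (X n)) + ENNReal.ofReal δ' :=
        (hcond (X n) (hXmeas n)).2
      have h2 : Measure.map f ν (thickening δ' (X n)) ≤ Measure.map f ν (X n) :=
        measure_mono (hthickAll δ' (le_trans hδ'lt.le hδε) n)
      have h3 : Measure.map f ν (X n) = ν (X (n + 1)) := by
        rw [Measure.map_apply hf.measurable (hXmeas n), hXsucc]
      calc ν' (X n) ≤ Measure.map f ν (thickening δ' (X n)) + ENNReal.ofReal δ' := h1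
        _ ≤ ν (X (n + 1)) + ENNReal.ofReal δ := by
            rw [← h3]
            exact add_le_add h2 (ENNReal.ofReal_le_ofReal hδ'lt.le)
    -- the extended (repeated) chain
    set C : ℕ → Measure (ℕ → Bool) := fun i => c (i % k) with hCdef
    have hCprob : ∀ i, IsProbabilityMeasure (C i) := fun i => hcprob _
    have hCstep : ∀ i, prohorovDist (Measure.map f (C i)) (C (i + 1)) < δ := by
      intro i
      have h1 : i % k < k := Nat.mod_lt _ (by omega)
      have h2 : C (i + 1) = c (i % k + 1) := by
        show c ((i + 1) % k) = c (i % k + 1)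
        have hmod : (i % k + 1) % k = (i + 1) % k := by
          conv_rhs => rw [← Nat.mod_add_mod]
        rcases Nat.lt_or_ge (i % k + 1) k with h | h
        · rw [← hmod, Nat.mod_eq_of_lt h]
        · have hk' : i % k + 1 = k := by omega
          rw [← hmod, hk', Nat.mod_self, hc0, hck]
      rw [h2]
      exact hstep (i % k) h1
    -- iterated estimate
    have claim : ∀ j i n, C (i + j) (X n) ≤ C i (X (n + j)) + j * ENNReal.ofReal δ := by
      intro j
      induction j with
      | zero => simp
      | succ j ih =>
        intro i n
        calc C (i + (j + 1)) (X n) = C ((i + 1) + j) (X n) := by rw [show i + (j+1) = (i+1)+j by omega]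
          _ ≤ C (i + 1) (X (n + j)) + j * ENNReal.ofReal δ := ih (i + 1) n
          _ ≤ (C i (X (n + j + 1)) + ENNReal.ofReal δ) + j * ENNReal.ofReal δ := by
              exact add_le_add_left (key (C i) (C (i + 1)) (hCprob i) (hCprob (i+1)) (hCstep i) (n + j)) _
          _ = C i (X (n + (j + 1))) + (j + 1 : ℕ) * ENNReal.ofReal δ := by
              rw [show n + j + 1 = n + (j + 1) by omega]
              push_cast
              rw [add_mul, one_mul, add_assoc, add_comm (ENNReal.ofReal δ)]
    have hN : q ≤ q * k := Nat.le_mul_of_pos_right q (by omega)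
    have hCN : C (q * k) = μ := by
      show c (q * k % k) = μ
      rw [Nat.mul_mod_left, hc0]
    have hfinal := claim q (q * k - q) 0
    rw [show q * k - q + q = q * k from Nat.sub_add_cancel hN, hCN, zero_add,
      show X q = ∅ from hqa, measure_empty, zero_add] at hfinal
    have hX0 : X 0 = a := by show f^[0] ⁻¹' a = a; simp
    rw [hX0] at hfinal
    calc μ a ≤ q * ENNReal.ofReal δ := hfinal
      _ ≤ q * ENNReal.ofReal (r / q) := by
          gcongr
          exact min_le_right _ _
      _ = ENNReal.ofReal r := by
          rw [← ENNReal.ofReal_natCast q, ← ENNReal.ofReal_mul (by positivity),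
            mul_div_cancel₀ r (ne_of_gt hq0)]
  -- conclude
  refine le_antisymm ?_ zero_le
  refine ENNReal.le_of_forall_pos_le_add fun ε' hε' _ => ?_
  rw [zero_add]
  calc μ a ≤ ENNReal.ofReal ε' := main ε' hε'
    _ = (ε' : ENNReal) := ENNReal.ofReal_coe_nnreal
end

section
/- Let h be a homeomorphism of a compact metric space M and let h̃ denote the induced map on the space of Borel probability measures on M. If V is a clopen subset of M such that the sets (h^{-n}(V))_{n≥0} are pairwise disjoint, then every recurrent point μ of h̃ satisfies μ(V) = 0. -/
open MeasureTheory Metric Set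

/-- If `V` is clopen and the sets `h^{-n}(V)`, `n ≥ 0`, are pairwise disjoint, then every
recurrent point `μ` of the induced map `h̃` satisfies `μ(V) = 0`. -/
theorem measure_eq_zero_of_recurrent {M : Type*} [MetricSpace M] [CompactSpace M]
    [MeasurableSpace M] [BorelSpace M] (h : M ≃ₜ M)
    (V : Set M) (hV : IsClopen V)
    (hd : ∀ m n : ℕ, m ≠ n → Disjoint ((⇑h)^[m] ⁻¹' V) ((⇑h)^[n] ⁻¹' V))
    (μ : Measure M) [IsProbabilityMeasure μ]
    (hrec : ∃ φ : ℕ → ℕ, StrictMono φ ∧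
      Filter.Tendsto (fun n => prohorovDist (Measure.map (⇑h)^[φ n] μ) μ)
        Filter.atTop (nhds 0)) :
    μ V = 0 := by
  obtain ⟨φ, hφ, htend⟩ := hrec
  have hmeas : ∀ n : ℕ, Measurable ((⇑h)^[n]) := fun n =>
    (h.continuous.iterate n).measurable
  have hVm : MeasurableSet V := hV.1.measurableSet
  -- thickening of V stays in V for small δ
  obtain ⟨δ0, hδ0, hthick⟩ :=
    (hV.1.isCompact).exists_thickening_subset_open hV.2 subset_rfl
  -- the preimage measures tend to zero
  have hsum : ∑' n : ℕ, μ ((⇑h)^[n] ⁻¹' V) ≤ 1 := by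
    rw [← measure_iUnion hd fun n => (hmeas n) hVm]
    exact prob_le_one
  have hzero : Filter.Tendsto (fun n => μ ((⇑h)^[n] ⁻¹' V)) Filter.atTop (nhds 0) :=
    ENNReal.tendsto_atTop_zero_of_tsum_ne_top (lt_of_le_of_lt hsum (by norm_num)).ne
  have hzero' : Filter.Tendsto (fun n => μ ((⇑h)^[φ n] ⁻¹' V)) Filter.atTop (nhds 0) :=
    hzero.comp hφ.tendsto_atTop
  refine le_antisymm ?_ zero_le
  refine ENNReal.le_of_forall_pos_le_add fun ε hε _ => ?_
  rw [zero_add]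
  set c : ℝ := min ((ε : ℝ) / 2) δ0 with hc
  have hcpos : 0 < c := lt_min (by positivity) hδ0
  have h1 : ∀ᶠ n in Filter.atTop,
      prohorovDist (Measure.map (⇑h)^[φ n] μ) μ < c := htend.eventually_lt_const hcpos
  have h2 : ∀ᶠ n in Filter.atTop,
      μ ((⇑h)^[φ n] ⁻¹' V) < ENNReal.ofReal ((ε : ℝ) / 2) := by
    refine hzero'.eventually_lt_const ?_
    exact ENNReal.ofReal_pos.2 (by positivity)
  obtain ⟨n, hn1, hn2⟩ := (h1.and h2).exists
  set ν := Measure.map (⇑h)^[φ n] μ with hν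
  -- extract δ from the sInf
  have hSne : ({δ : ℝ | 0 < δ ∧ ∀ X : Set M, MeasurableSet X →
      ν X ≤ μ (Metric.thickening δ X) + ENNReal.ofReal δ ∧
      μ X ≤ ν (Metric.thickening δ X) + ENNReal.ofReal δ}).Nonempty := by
    refine ⟨1, one_pos, fun X hX => ⟨?_, ?_⟩⟩ <;>
      exact le_trans prob_le_one (by simp)
  have hbdd : BddBelow {δ : ℝ | 0 < δ ∧ ∀ X : Set M, MeasurableSet X →
      ν X ≤ μ (Metric.thickening δ X) + ENNReal.ofReal δ ∧
      μ X ≤ ν (Metric.thickening δ X) + ENNReal.ofReal δ} :=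
    ⟨0, fun x hx => hx.1.le⟩
  have hlt : prohorovDist ν μ < c := hn1
  rw [prohorovDist] at hlt
  obtain ⟨δ, hδS, hδc⟩ := (csInf_lt_iff hbdd hSne).1 hlt
  obtain ⟨hδpos, hδprop⟩ := hδS
  have key := (hδprop V hVm).2
  have hsub : Metric.thickening δ V ⊆ V :=
    (Metric.thickening_mono (le_of_lt (lt_of_lt_of_le hδc (min_le_right _ _))) V).trans hthick
  have hνV : ν V = μ ((⇑h)^[φ n] ⁻¹' V) := Measure.map_apply (hmeas _) hVm
  calc μ V ≤ ν (Metric.thickening δ V) + ENNReal.ofReal δ := key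
    _ ≤ ν V + ENNReal.ofReal ((ε : ℝ) / 2) :=
        add_le_add (measure_mono hsub)
          (ENNReal.ofReal_le_ofReal (le_of_lt (lt_of_lt_of_le hδc (min_le_left _ _))))
    _ ≤ ENNReal.ofReal ((ε : ℝ) / 2) + ENNReal.ofReal ((ε : ℝ) / 2) :=
        add_le_add (by rw [hνV]; exact hn2.le) le_rfl
    _ = (ε : ENNReal) := by
        rw [← ENNReal.ofReal_add (by positivity) (by positivity), add_halves,
          ENNReal.ofReal_coe_nnreal]
end
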